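/- arXiv:math/9903169 — 9 statements merged into one kernel-verified Lean document; each statement's English description precedes it below -/
import Mathlib

section
/- For n ≥ 1, the number of permutations of length n that avoid both the pattern 123 and the pattern 132 is 2^(n-1). -/
open Finset Equiv

namespace Stmt1Aux

/-- The key characterization predicate: every entry is among the top two remaining values,
equivalently `π i ≥ n - 2 - i` for all `i`. -/
def P (n : ℕ) (π : Equiv.Perm (Fin n)) : Prop := ∀ i : Fin n, n ≤ i.val + (π i).val + 2

lemma val_succAbove {n : ℕ} (p : Fin (n + 1)) (j : Fin n) :
    (p.succAbove j).val = if j.val < p.val then j.val else j.val + 1 := by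
  rcases lt_or_ge (Fin.castSucc j) p with h | h
  · rw [Fin.succAbove_of_castSucc_lt _ _ h]
    simp only [Fin.lt_def, Fin.coe_castSucc] at h
    simp [h]
  · rw [Fin.succAbove_of_le_castSucc _ _ h]
    simp only [Fin.le_def, Fin.coe_castSucc] at h
    rw [Fin.val_succ, if_neg (by omega)]

/-- Insert `p` at the front and relabel values order-preservingly avoiding `p`. -/
def g {n : ℕ} (p : Fin (n + 1)) (σ : Equiv.Perm (Fin n)) : Equiv.Perm (Fin (n + 1)) :=
  (finSuccEquiv' 0).trans ((Equiv.optionCongr σ).trans (finSuccEquiv' p).symm)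

def f {n : ℕ} (p : Fin (n + 1)) (π : Equiv.Perm (Fin (n + 1))) : Equiv.Perm (Fin n) :=
  Equiv.removeNone ((finSuccEquiv' 0).symm.trans (π.trans (finSuccEquiv' p)))

lemma g_zero {n : ℕ} (p : Fin (n + 1)) (σ : Equiv.Perm (Fin n)) : g p σ 0 = p := by
  simp [g, finSuccEquiv'_at, finSuccEquiv'_symm_none]

lemma g_succ {n : ℕ} (p : Fin (n + 1)) (σ : Equiv.Perm (Fin n)) (i : Fin n) :
    g p σ i.succ = p.succAbove (σ i) := by
  have h0 : (finSuccEquiv' (0 : Fin (n + 1))) i.succ = some i := by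
    rw [← Fin.zero_succAbove i, finSuccEquiv'_succAbove]
  simp [g, h0, finSuccEquiv'_symm_some]

lemma f_g {n : ℕ} (p : Fin (n + 1)) (σ : Equiv.Perm (Fin n)) : f p (g p σ) = σ := by
  have : (finSuccEquiv' (0 : Fin (n+1))).symm.trans ((g p σ).trans (finSuccEquiv' p))
      = Equiv.optionCongr σ := by
    ext o
    simp [g]
  rw [f, this, Equiv.removeNone_optionCongr]

lemma g_f {n : ℕ} (p : Fin (n + 1)) (π : Equiv.Perm (Fin (n + 1))) (h : π 0 = p) :
    g p (f p π) = π := by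
  set e := (finSuccEquiv' (0 : Fin (n+1))).symm.trans (π.trans (finSuccEquiv' p)) with he
  ext j
  refine Fin.cases ?_ ?_ j
  · rw [g_zero, ← h]
  · intro i
    rw [g_succ]
    have hsome : (finSuccEquiv' (0 : Fin (n+1))).symm (some i) = i.succ := by
      rw [finSuccEquiv'_symm_some, Fin.zero_succAbove]
    have hne : π i.succ ≠ p := by
      rw [← h]; intro hc
      exact (Fin.succ_ne_zero i) (π.injective hc)
    obtain ⟨x, hx⟩ := Fin.exists_succAbove_eq hne
    have hex : e (some i) = some x := by
      rw [he]
      simp only [Equiv.trans_apply, hsome]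
      rw [← hx, finSuccEquiv'_succAbove]
    have := Equiv.removeNone_some (e := e) ⟨x, hex⟩
    rw [hex] at this
    have hri : Equiv.removeNone e i = x := Option.some_injective _ this
    rw [f, ← he, hri, hx]

lemma P_g_iff {n : ℕ} (p : Fin (n + 1)) (σ : Equiv.Perm (Fin n)) (hp : n ≤ p.val + 1) :
    P (n + 1) (g p σ) ↔ P n σ := by
  constructor
  · intro h i
    have hi := h i.succ
    rw [g_succ, Fin.val_succ] at hi
    rw [val_succAbove] at hi
    split at hi
    · omega
    · have : n ≤ (σ i).val + 1 := by omega
      omega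
  · intro h j
    refine Fin.cases ?_ ?_ j
    · rw [g_zero]
      simpa using by omega
    · intro i
      rw [g_succ, Fin.val_succ, val_succAbove]
      have := h i
      split <;> omega

def pbase (n : ℕ) (b : Bool) (hn : 1 ≤ n) : Fin (n + 1) :=
  if b then Fin.last n else ⟨n - 1, by omega⟩

lemma pbase_ge (n : ℕ) (b : Bool) (hn : 1 ≤ n) : n ≤ (pbase n b hn).val + 1 := by
  unfold pbase; split <;> simp [Fin.last] <;> omega

def E (n : ℕ) (hn : 1 ≤ n) :
    {π : Equiv.Perm (Fin (n + 1)) // P (n + 1) π} ≃ Bool × {σ : Equiv.Perm (Fin n) // P n σ} where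
  toFun π := ⟨decide (π.val 0 = Fin.last n), ⟨f (π.val 0) π.val, by
    have hp : n ≤ (π.val 0).val + 1 := by
      have := π.prop 0
      simp only [Fin.val_zero] at this
      omega
    exact (P_g_iff (π.val 0) (f (π.val 0) π.val) hp).mp
      (by rw [g_f (π.val 0) π.val rfl]; exact π.prop)⟩⟩
  invFun bσ := ⟨g (pbase n bσ.1 hn) bσ.2.val,
    (P_g_iff _ _ (pbase_ge n bσ.1 hn)).mpr bσ.2.prop⟩
  left_inv π := by
    have hval : pbase n (decide (π.val 0 = Fin.last n)) hn = π.val 0 := by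
      have h0 := π.prop 0
      simp only [Fin.val_zero] at h0
      by_cases hc : π.val 0 = Fin.last n
      · simp [pbase, hc]
      · have : (π.val 0).val = n - 1 := by
          have := (π.val 0).isLt
          have hne : (π.val 0).val ≠ n := fun hv => hc (Fin.ext (by simp [hv, Fin.last]))
          omega
        simp only [pbase, hc, decide_eq_true_eq]
        rw [if_neg (by simp [hc])]
        exact Fin.ext (by simp [this])
    apply Subtype.ext
    simp only
    rw [hval, g_f (π.val 0) π.val rfl]
  right_inv bσ := by
    obtain ⟨b, σ⟩ := bσ
    have h0 : g (pbase n b hn) σ.val 0 = pbase n b hn := g_zero _ _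
    refine Prod.ext ?_ ?_
    · simp only [h0]
      cases b
      · simp only [pbase, Bool.false_eq_true, if_false]
        simp only [decide_eq_false_iff_not]
        intro hc
        have := congrArg Fin.val hc
        simp [Fin.last] at this
        omega
      · simp [pbase]
    · apply Subtype.ext
      simp only [h0]
      exact f_g _ _

lemma count : ∀ n : ℕ, 1 ≤ n →
    Nat.card {π : Equiv.Perm (Fin n) // P n π} = 2 ^ (n - 1) := by
  refine Nat.le_induction ?_ ?_
  · have hall : ∀ π : Equiv.Perm (Fin 1), P 1 π := fun π i => by omega
    rw [Nat.card_congr (Equiv.subtypeUnivEquiv hall)]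
    simp [Nat.card_eq_fintype_card]
  · intro n hn ih
    rw [Nat.card_congr (E n hn), Nat.card_prod, ih]
    simp only [Nat.card_eq_fintype_card, Fintype.card_bool]
    rw [Nat.add_sub_cancel]
    have : n - 1 + 1 = n := by omega
    rw [← pow_succ', this]

section PattEquiv

variable {n : ℕ} (π : Equiv.Perm (Fin n))

lemma no_comb_of_P (h : P n π) :
    ¬ ∃ i j k : Fin n, i < j ∧ j < k ∧ π i < π j ∧ π i < π k := by
  rintro ⟨i, j, k, hij, hjk, h1, h2⟩
  have hik : i < k := hij.trans hjk
  have hin : i.val + 2 ≤ n - 1 := by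
    have := k.isLt
    have hij' : i.val < j.val := hij
    have hjk' : j.val < k.val := hjk
    omega
  have hn0 : 0 < n := by have := i.isLt; omega
  set a : Fin n := ⟨n - 1 - i.val, by omega⟩ with ha
  set S : Finset (Fin n) := Finset.Ici a with hS
  have hScard : S.card = i.val + 1 := by
    rw [hS, Fin.card_Ici]
    simp only [ha]
    omega
  set T : Finset (Fin n) := Finset.Iio i ∪ {j, k} with hT
  have hdisj : Disjoint (Finset.Iio i) ({j, k} : Finset (Fin n)) := by
    rw [Finset.disjoint_left]
    intro t ht hmem
    simp only [Finset.mem_Iio] at ht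
    simp only [Finset.mem_insert, Finset.mem_singleton] at hmem
    rcases hmem with rfl | rfl
    · exact absurd hij (not_lt_of_gt ht)
    · exact absurd hik (not_lt_of_gt ht)
  have hTcard : T.card = i.val + 2 := by
    rw [hT, Finset.card_union_of_disjoint hdisj, Fin.card_Iio,
      Finset.card_pair (Fin.ne_of_lt hjk)]
  have hmapsto : T.image π ⊆ S := by
    intro v hv
    simp only [Finset.mem_image] at hv
    obtain ⟨t, ht, rfl⟩ := hv
    rw [hS, Finset.mem_Ici, Fin.le_def]
    simp only [ha]
    rw [hT, Finset.mem_union, Finset.mem_Iio, Finset.mem_insert, Finset.mem_singleton] at ht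
    rcases ht with ht | rfl | rfl
    · have hP := h t
      have : t.val < i.val := ht
      omega
    · have hP := h i
      have : (π i).val < (π t).val := h1
      omega
    · have hP := h i
      have : (π i).val < (π t).val := h2
      omega
  have := Finset.card_le_card hmapsto
  rw [Finset.card_image_of_injective _ π.injective, hTcard, hScard] at this
  omega

lemma P_of_no_comb
    (h : ¬ ∃ i j k : Fin n, i < j ∧ j < k ∧ π i < π j ∧ π i < π k) : P n π := by
  intro i
  by_contra hc
  push_neg at hc
  classical
  set B : Finset (Fin n) := univ.filter (fun t => i < t ∧ π i < π t) with hB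
  have hAcard : (univ.filter (fun t => π i < π t)).card = n - 1 - (π i).val := by
    have hcongr : Fintype.card {t : Fin n // π i < π t} = Fintype.card {v : Fin n // π i < v} :=
      Fintype.card_congr (Equiv.subtypeEquiv π (fun t => Iff.rfl))
    rw [Fintype.card_subtype, Fintype.card_subtype] at hcongr
    rw [hcongr]
    have : (univ.filter (fun v : Fin n => π i < v)) = Finset.Ioi (π i) := by
      ext v; simp
    rw [this, Fin.card_Ioi]
  have hsplit : (univ.filter (fun t => π i < π t)) ⊆ B ∪ Finset.Iio i := by
    intro t ht
    simp only [Finset.mem_filter, Finset.mem_univ, true_and] at ht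
    rcases lt_trichotomy i t with hlt | rfl | hgt
    · exact Finset.mem_union_left _ (by simp [hB, hlt, ht])
    · exact absurd ht (lt_irrefl _)
    · exact Finset.mem_union_right _ (Finset.mem_Iio.mpr hgt)
  have hcardle := (Finset.card_le_card hsplit).trans (Finset.card_union_le _ _)
  rw [hAcard, Fin.card_Iio] at hcardle
  have hB2 : 2 ≤ B.card := by
    have := (π i).isLt
    omega
  obtain ⟨a, haB, b, hbB, hab⟩ := Finset.one_lt_card.mp hB2
  simp only [hB, Finset.mem_filter, Finset.mem_univ, true_and] at haB hbB
  rcases lt_or_gt_of_ne hab with hlt | hgt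
  · exact h ⟨i, a, b, haB.1, hlt, haB.2, hbB.2⟩
  · exact h ⟨i, b, a, hbB.1, hgt, hbB.2, haB.2⟩

lemma patt_iff :
    ((¬ ∃ i j k : Fin n, i < j ∧ j < k ∧ π i < π j ∧ π j < π k) ∧
     (¬ ∃ i j k : Fin n, i < j ∧ j < k ∧ π i < π k ∧ π k < π j)) ↔ P n π := by
  constructor
  · rintro ⟨h1, h2⟩
    apply P_of_no_comb
    rintro ⟨i, j, k, hij, hjk, ha, hb⟩
    rcases lt_trichotomy (π j) (π k) with hh | hh | hh
    · exact h1 ⟨i, j, k, hij, hjk, ha, hh⟩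
    · exact absurd (π.injective hh) (Fin.ne_of_lt hjk)
    · exact h2 ⟨i, j, k, hij, hjk, hb, hh⟩
  · intro hp
    have hno := no_comb_of_P π hp
    constructor
    · rintro ⟨i, j, k, hij, hjk, h1, h2⟩
      exact hno ⟨i, j, k, hij, hjk, h1, h1.trans h2⟩
    · rintro ⟨i, j, k, hij, hjk, h1, h2⟩
      exact hno ⟨i, j, k, hij, hjk, h1.trans h2, h1⟩

end PattEquiv

end Stmt1Aux

/-- For `n ≥ 1`, the number of permutations of length `n` avoiding both the
pattern 123 and the pattern 132 is `2^(n-1)`. -/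
theorem stmt1 (n : ℕ) (hn : 1 ≤ n) :
    Nat.card {π : Equiv.Perm (Fin n) //
      (¬ ∃ i j k : Fin n, i < j ∧ j < k ∧ π i < π j ∧ π j < π k) ∧
      (¬ ∃ i j k : Fin n, i < j ∧ j < k ∧ π i < π k ∧ π k < π j)} = 2 ^ (n - 1) := by
  rw [Nat.card_congr (Equiv.subtypeEquivRight (fun π => Stmt1Aux.patt_iff π))]
  exact Stmt1Aux.count n hn
end

section
/- For n ≥ 3, the number of permutations of length n that avoid the pattern 132 and contain exactly one occurrence of the pattern 123 is (n-2)·2^(n-3). -/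
/-!
Encode a permutation `π` of `Fin n` by `c i = #{j > i | π i < π j}`. As for the Lehmer code,
`π i` is the unused value having exactly `c i` unused values above it, so `π ↦ c` is a bijection
onto `∏ i, Fin (n - i)`.

Pushing the first entry of a 132 forward shows that a permutation containing 132 contains one at
positions `i, i + 1, k`; hence `π` avoids 132 iff `c i ≤ c (i + 1) + 1` for all `i`. For such `π`
the 123-occurrences starting at `i` are the pairs in `{j > i | π i < π j}`, so there is exactly
one iff `c d = 2` for one `d` and `c i ≤ 1` otherwise, and then `c (d + 1) = 1` is forced. For
each of the `n - 2` possible `d`, every position other than `d`, `d + 1` and the last one takes a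
value in `{0, 1}`, which gives `(n - 2) * 2 ^ (n - 3)` codes.
-/

open Finset

theorem Finset.strictAntiOn_card_filter_lt {α : Type*} [LinearOrder α] (s : Finset α) :
    StrictAntiOn (fun v => #{x ∈ s | v < x}) s := by
  intro v _ w hw hvw
  refine card_lt_card ((ssubset_iff_of_subset ?_).2 ⟨w, ?_, ?_⟩)
  · exact monotone_filter_right s fun x _ (hwx : w < x) => hvw.trans hwx
  · simpa using ⟨hw, hvw⟩
  · simp

theorem Finset.eq_and_eq_of_lt_of_lt_of_card_le_two {α : Type*} [LinearOrder α] {s : Finset α}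
    (hs : #s ≤ 2) {y z j k : α} (hy : y ∈ s) (hz : z ∈ s) (hj : j ∈ s) (hk : k ∈ s)
    (hyz : y < z) (hjk : j < k) : y = j ∧ z = k := by
  have hpair : s = {y, z} := (eq_of_subset_of_card_le (by simp [insert_subset_iff, hy, hz])
    (hs.trans_eq (card_pair hyz.ne).symm)).symm
  subst hpair
  simp only [mem_insert, mem_singleton] at hj hk
  rcases hj with rfl | rfl <;> rcases hk with rfl | rfl <;> simp_all [lt_asymm hyz]

theorem Fin.card_filter_val_eq {m v : ℕ} (hv : v < m) : #{x : Fin m | (x : ℕ) = v} = 1 :=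
  card_eq_one.2 ⟨⟨v, hv⟩, by ext x; simp [Fin.ext_iff]⟩

theorem Fin.card_filter_val_le_one {m : ℕ} : #{x : Fin m | (x : ℕ) ≤ 1} = min m 2 := by
  rw [← Fin.card_filter_val_lt]
  congr 1
  ext x
  simp only [mem_filter, mem_univ, true_and]
  omega

namespace Equiv.Perm

variable {n : ℕ} (π : Perm (Fin n))

def largerAfter (i : Fin n) : Finset (Fin n) := {j | i < j ∧ π i < π j}

variable {π} in
@[simp]
theorem mem_largerAfter {i j : Fin n} : j ∈ π.largerAfter i ↔ i < j ∧ π i < π j := by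
  simp [largerAfter]

theorem card_largerAfter_lt (i : Fin n) : #(π.largerAfter i) < n - i := by
  have := card_le_card fun j (hj : j ∈ π.largerAfter i) => mem_Ioi.2 (mem_largerAfter.1 hj).1
  rw [Fin.card_Ioi] at this
  omega

def largerAfterCode (i : Fin n) : Fin (n - i) := ⟨#(π.largerAfter i), π.card_largerAfter_lt i⟩

@[simp]
theorem coe_largerAfterCode (i : Fin n) : (π.largerAfterCode i : ℕ) = #(π.largerAfter i) := rfl

theorem image_largerAfter (i : Fin n) :
    (π.largerAfter i).image π = ({x | x ∉ (Iio i).image π ∧ π i < x} : Finset (Fin n)) := by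
  ext x
  obtain ⟨j, rfl⟩ := π.surjective x
  simp only [mem_image, mem_largerAfter, π.injective.eq_iff, exists_eq_right, mem_filter,
    mem_univ, true_and, mem_Iio, not_exists, not_and]
  constructor
  · exact fun h => ⟨fun k hk hkj => (hk.trans (hkj ▸ h.1)).false, h.2⟩
  · refine fun h => ⟨lt_of_not_ge fun hji => ?_, h.2⟩
    rcases hji.lt_or_eq with hji | rfl
    · exact h.1 j hji rfl
    · exact lt_irrefl _ h.2

theorem largerAfterCode_injective : Function.Injective (largerAfterCode (n := n)) := by
  intro π σ h
  ext1 i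
  induction i using WellFoundedLT.induction with
  | _ i ih =>
    have hprefix : (Iio i).image π = (Iio i).image σ :=
      image_congr fun j hj => ih j (mem_Iio.1 hj)
    have hcard : #(π.largerAfter i) = #(σ.largerAfter i) := congrArg Fin.val (congrFun h i)
    rw [← card_image_of_injective (π.largerAfter i) π.injective,
      ← card_image_of_injective (σ.largerAfter i) σ.injective,
      image_largerAfter, image_largerAfter, hprefix, ← filter_filter, ← filter_filter] at hcard
    have hmem : ∀ τ : Perm (Fin n), (Iio i).image τ = (Iio i).image σ →
        τ i ∈ ({x | x ∉ (Iio i).image σ} : Finset (Fin n)) := by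
      intro τ hτ
      simpa [← hτ, τ.injective.eq_iff] using fun x hx => hx.ne
    exact (strictAntiOn_card_filter_lt _).injOn (hmem π hprefix) (hmem σ rfl) hcard

theorem largerAfterCode_bijective : Function.Bijective (largerAfterCode (n := n)) := by
  rw [Fintype.bijective_iff_injective_and_card]
  refine ⟨largerAfterCode_injective, ?_⟩
  rw [Fintype.card_perm, Fintype.card_fin, Fintype.card_pi]
  simp only [Fintype.card_fin]
  rw [Fin.prod_univ_eq_prod_range (n - ·), ← Nat.descFactorial_eq_prod_range,
    Nat.descFactorial_self]

def IsPattern132 (i j k : Fin n) : Prop := i < j ∧ j < k ∧ π i < π k ∧ π k < π j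

def IsPattern123 (i j k : Fin n) : Prop := i < j ∧ j < k ∧ π i < π j ∧ π j < π k

theorem exists_adjacent_isPattern132 {i j k : Fin n} (h : π.IsPattern132 i j k) :
    ∃ i j k : Fin n, (j : ℕ) = i + 1 ∧ π.IsPattern132 i j k := by
  obtain ⟨hij, hjk, hik, hkj⟩ := h
  obtain ⟨m, hm⟩ : ∃ m : Fin n, (m : ℕ) = i + 1 := ⟨⟨i + 1, by omega⟩, rfl⟩
  have him : i < m := Fin.lt_def.2 (by omega)
  have hmj : m ≤ j := Fin.le_def.2 (by have := Fin.lt_def.1 hij; omega)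
  rcases lt_or_gt_of_ne (π.injective.ne (hmj.trans_lt hjk).ne) with hmk | hkm
  · have hmj' : m < j := lt_of_le_of_ne hmj (by rintro rfl; exact lt_asymm hmk hkj)
    exact exists_adjacent_isPattern132 ⟨hmj', hjk, hmk, hkj⟩
  · exact ⟨i, m, k, hm, him, hmj.trans_lt hjk, hik, hkm⟩
termination_by n - i
decreasing_by omega

theorem largerAfter_subset_erase {i j : Fin n} (hij : i < j) (h : π i < π j) :
    π.largerAfter j ⊆ (π.largerAfter i).erase j := by
  intro k hk
  rw [mem_largerAfter] at hk
  exact mem_erase.2 ⟨hk.1.ne', mem_largerAfter.2 ⟨hij.trans hk.1, h.trans hk.2⟩⟩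

theorem largerAfter_subset_of_succ {i j : Fin n} (hj : (j : ℕ) = i + 1) (h : π j < π i) :
    π.largerAfter i ⊆ π.largerAfter j := by
  intro k hk
  rw [mem_largerAfter] at hk ⊢
  have hkj : k ≠ j := by rintro rfl; exact lt_asymm h hk.2
  have hik := Fin.lt_def.1 hk.1
  exact ⟨Fin.lt_def.2 (by have := Fin.val_ne_of_ne hkj; omega), h.trans hk.2⟩

theorem not_exists_isPattern132_iff :
    (¬ ∃ i j k, π.IsPattern132 i j k) ↔
      ∀ i j : Fin n, (j : ℕ) = i + 1 → (π.largerAfterCode i : ℕ) ≤ π.largerAfterCode j + 1 := by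
  simp only [coe_largerAfterCode]
  constructor
  · intro h i j hj
    by_contra! hlt
    have hij : i < j := Fin.lt_def.2 (by omega)
    rcases lt_or_gt_of_ne (π.injective.ne hij.ne') with hji | hij'
    · have := card_le_card (π.largerAfter_subset_of_succ hj hji)
      omega
    · have hcard : #(π.largerAfter j) < #((π.largerAfter i).erase j) := by
        rw [card_erase_of_mem (mem_largerAfter.2 ⟨hij, hij'⟩)]
        omega
      obtain ⟨k, hk, hkj⟩ := exists_mem_notMem_of_card_lt_card hcard
      rw [mem_erase, mem_largerAfter] at hk
      have hjk : j < k := Fin.lt_def.2 (by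
        have := Fin.lt_def.1 hk.2.1; have := Fin.val_ne_of_ne hk.1; omega)
      have hpkj : π k < π j := lt_of_le_of_ne (not_lt.1 fun h => hkj (mem_largerAfter.2 ⟨hjk, h⟩))
        (π.injective.ne hk.1)
      exact h ⟨i, j, k, hij, hjk, hk.2.2, hpkj⟩
  · rintro h ⟨i, j, k, hp⟩
    obtain ⟨i, j, k, hj, hij, hjk, hik, hkj⟩ := π.exists_adjacent_isPattern132 hp
    have hssub : π.largerAfter j ⊂ (π.largerAfter i).erase j := by
      refine (ssubset_iff_of_subset (π.largerAfter_subset_erase hij (hik.trans hkj))).2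
        ⟨k, ?_, ?_⟩
      · exact mem_erase.2 ⟨hjk.ne', mem_largerAfter.2 ⟨hij.trans hjk, hik⟩⟩
      · exact fun hk => lt_asymm hkj (mem_largerAfter.1 hk).2
    have := card_lt_card hssub
    have := h i j hj
    rw [card_erase_of_mem (mem_largerAfter.2 ⟨hij, hik.trans hkj⟩)] at *
    omega

variable {π}

theorem isPattern123_iff (h132 : ¬ ∃ i j k, π.IsPattern132 i j k) {i j k : Fin n} :
    π.IsPattern123 i j k ↔ j ∈ π.largerAfter i ∧ k ∈ π.largerAfter i ∧ j < k := by
  simp only [mem_largerAfter]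
  constructor
  · rintro ⟨hij, hjk, hpij, hpjk⟩
    exact ⟨⟨hij, hpij⟩, ⟨hij.trans hjk, hpij.trans hpjk⟩, hjk⟩
  · rintro ⟨⟨hij, hpij⟩, ⟨-, hpik⟩, hjk⟩
    refine ⟨hij, hjk, hpij, lt_of_not_ge fun hpkj => h132 ⟨i, j, k, hij, hjk, hpik, ?_⟩⟩
    exact lt_of_le_of_ne hpkj (π.injective.ne hjk.ne')

theorem exists_isPattern123_of_two_le_card (h132 : ¬ ∃ i j k, π.IsPattern132 i j k) {i : Fin n}
    (hi : 2 ≤ #(π.largerAfter i)) : ∃ j k, π.IsPattern123 i j k := by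
  obtain ⟨a, ha, b, hb, hab⟩ := one_lt_card.1 hi
  rcases lt_or_gt_of_ne hab with hab | hba
  · exact ⟨a, b, (isPattern123_iff h132).2 ⟨ha, hb, hab⟩⟩
  · exact ⟨b, a, (isPattern123_iff h132).2 ⟨hb, ha, hba⟩⟩

theorem existsUnique_isPattern123_iff (h132 : ¬ ∃ i j k, π.IsPattern132 i j k) :
    (∃! t : Fin n × Fin n × Fin n, π.IsPattern123 t.1 t.2.1 t.2.2) ↔
      ∃ d, (π.largerAfterCode d : ℕ) = 2 ∧ ∀ i ≠ d, (π.largerAfterCode i : ℕ) ≤ 1 := by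
  simp only [coe_largerAfterCode]
  constructor
  · rintro ⟨⟨a, b, c⟩, habc, huniq⟩
    have hle : ∀ i ≠ a, #(π.largerAfter i) ≤ 1 := by
      intro i hi
      by_contra! h2
      obtain ⟨j, k, hijk⟩ := exists_isPattern123_of_two_le_card h132 h2
      exact hi (congrArg Prod.fst (huniq (i, j, k) hijk))
    obtain ⟨hb, hc, hbc⟩ := (isPattern123_iff h132).1 habc
    have hsub : π.largerAfter a ⊆ {b, c} := by
      intro e he
      rcases lt_trichotomy e b with heb | rfl | hbe
      · have := huniq (a, e, b) ((isPattern123_iff h132).2 ⟨he, hb, heb⟩)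
        simp_all
      · simp
      · have := huniq (a, b, e) ((isPattern123_iff h132).2 ⟨hb, he, hbe⟩)
        simp_all
    refine ⟨a, le_antisymm ((card_le_card hsub).trans card_le_two) ?_, hle⟩
    exact one_lt_card.2 ⟨b, hb, c, hc, hbc.ne⟩
  · rintro ⟨d, hd, hle⟩
    obtain ⟨j, k, hjk⟩ := exists_isPattern123_of_two_le_card h132 hd.ge
    refine ⟨(d, j, k), hjk, ?_⟩
    rintro ⟨x, y, z⟩ hxyz
    obtain ⟨hy, hz, hyz⟩ := (isPattern123_iff h132).1 hxyz
    obtain rfl : x = d := by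
      by_contra hx
      exact absurd (hle x hx) (not_le.2 (one_lt_card.2 ⟨y, hy, z, hz, hyz.ne⟩))
    obtain ⟨hj, hk, hjk'⟩ := (isPattern123_iff h132).1 hjk
    obtain ⟨rfl, rfl⟩ :=
      eq_and_eq_of_lt_of_lt_of_card_le_two hd.le hy hz hj hk hyz hjk'
    rfl

end Equiv.Perm

section SingleDefectCodes

variable {n : ℕ}

def defectValues (d i : Fin n) : Finset (Fin (n - i)) :=
  {x | if (i : ℕ) = d then (x : ℕ) = 2 else if (i : ℕ) = d + 1 then (x : ℕ) = 1 else (x : ℕ) ≤ 1}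

theorem card_defectValues {d : Fin n} (hd : (d : ℕ) < n - 2) (i : Fin n) :
    #(defectValues d i) = if (i : ℕ) = d ∨ (i : ℕ) = d + 1 ∨ (i : ℕ) = n - 1 then 1 else 2 := by
  have hi := i.isLt
  unfold defectValues
  by_cases h1 : (i : ℕ) = d
  · simp only [h1, if_true, true_or]
    exact Fin.card_filter_val_eq (by omega)
  by_cases h2 : (i : ℕ) = d + 1
  · simp only [h2, if_true, true_or, or_true, Nat.succ_ne_self, if_false]
    exact Fin.card_filter_val_eq (by omega)
  simp only [h1, h2, if_false, false_or, Fin.card_filter_val_le_one]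
  split_ifs <;> omega

theorem card_piFinset_defectValues {d : Fin n} (hd : (d : ℕ) < n - 2) :
    #(Fintype.piFinset (defectValues d)) = 2 ^ (n - 3) := by
  let t : Finset ℕ := {(d : ℕ), (d : ℕ) + 1, n - 1}
  have ht : t ⊆ range n := by
    simp only [t, insert_subset_iff, singleton_subset_iff, mem_range]
    omega
  have ht3 : #t = 3 := by
    rw [card_insert_of_notMem (by simp; omega), card_pair (by omega)]
  rw [Fintype.card_piFinset, Finset.prod_congr rfl fun i _ => card_defectValues hd i,
    Fin.prod_univ_eq_prod_range (fun v => if v = d ∨ v = d + 1 ∨ v = n - 1 then 1 else 2)]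
  have hmem : ∀ v : ℕ, (v = d ∨ v = d + 1 ∨ v = n - 1) ↔ v ∈ t := by simp [t]
  simp_rw [hmem]
  rw [prod_ite, prod_const_one, one_mul, prod_const, filter_notMem_eq_sdiff,
    card_sdiff_of_subset ht, card_range, ht3]

theorem restricted_and_single_defect_iff (c : ∀ i : Fin n, Fin (n - i)) :
    ((∀ i j : Fin n, (j : ℕ) = i + 1 → (c i : ℕ) ≤ c j + 1) ∧
        ∃ d, (c d : ℕ) = 2 ∧ ∀ i ≠ d, (c i : ℕ) ≤ 1) ↔
      ∃ d : Fin n, (d : ℕ) < n - 2 ∧ c ∈ Fintype.piFinset (defectValues d) := by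
  simp only [Fintype.mem_piFinset, defectValues, mem_filter, mem_univ, true_and]
  constructor
  · rintro ⟨hstep, d, hd, hle⟩
    have hdn : (d : ℕ) < n - 2 := by have := (c d).isLt; omega
    let e : Fin n := ⟨d + 1, by omega⟩
    have hce : (c e : ℕ) = 1 := by
      have := hle e fun h => by simpa [e] using congrArg Fin.val h
      have := hstep d e rfl
      omega
    refine ⟨d, hdn, fun i => ?_⟩
    split_ifs with h1 h2
    · rwa [Fin.ext h1]
    · rwa [show i = e from Fin.ext h2]
    · exact hle i fun h => h1 (congrArg Fin.val h)
  · rintro ⟨d, -, hc⟩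
    refine ⟨fun i j hj => ?_, d, by simpa using hc d, fun i hi => ?_⟩
    · have hi := hc i
      have hj' := hc j
      split_ifs at hi hj' <;> omega
    · have hi' := hc i
      have := Fin.val_ne_of_ne hi
      split_ifs at hi' <;> omega

theorem card_restricted_and_single_defect :
    Nat.card {c : ∀ i : Fin n, Fin (n - i) //
      (∀ i j : Fin n, (j : ℕ) = i + 1 → (c i : ℕ) ≤ c j + 1) ∧
        ∃ d, (c d : ℕ) = 2 ∧ ∀ i ≠ d, (c i : ℕ) ≤ 1} = (n - 2) * 2 ^ (n - 3) := by
  classical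
  rw [Nat.card_eq_fintype_card, Fintype.card_of_subtype
    (({d | (d : ℕ) < n - 2} : Finset (Fin n)).biUnion fun d => Fintype.piFinset (defectValues d))
    fun c => by simp only [restricted_and_single_defect_iff, mem_biUnion, mem_filter, mem_univ,
      true_and], card_biUnion]
  · rw [sum_congr rfl fun d hd => card_piFinset_defectValues (mem_filter.1 hd).2, sum_const,
      smul_eq_mul, Fin.card_filter_val_lt, min_eq_right (Nat.sub_le n 2)]
  · intro d₁ _ d₂ _ hne
    refine disjoint_left.2 fun c hc₁ hc₂ => ?_
    simp only [Fintype.mem_piFinset, defectValues, mem_filter, mem_univ, true_and] at hc₁ hc₂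
    have h₁ := hc₁ d₁
    have h₂ := hc₂ d₁
    have := Fin.val_ne_of_ne hne
    simp only [if_true] at h₁
    split_ifs at h₂ <;> omega

end SingleDefectCodes

theorem stmt3_general (n : ℕ) :
    Nat.card {π : Equiv.Perm (Fin n) //
      (¬ ∃ i j k : Fin n, i < j ∧ j < k ∧ π i < π k ∧ π k < π j) ∧
      (∃! t : Fin n × Fin n × Fin n,
        t.1 < t.2.1 ∧ t.2.1 < t.2.2 ∧ π t.1 < π t.2.1 ∧ π t.2.1 < π t.2.2)} =
    (n - 2) * 2 ^ (n - 3) := by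
  rw [← card_restricted_and_single_defect]
  refine Nat.card_congr <|
    (Equiv.ofBijective _ Equiv.Perm.largerAfterCode_bijective).subtypeEquiv fun π => ?_
  exact (and_congr_right Equiv.Perm.existsUnique_isPattern123_iff).trans
    (and_congr_left' π.not_exists_isPattern132_iff)

/-- For `n ≥ 3`, the number of permutations of length `n` avoiding the pattern 132
and containing exactly one occurrence of the pattern 123 is `(n-2)·2^(n-3)`. -/
theorem stmt3 (n : ℕ) (hn : 3 ≤ n) :
    Nat.card {π : Equiv.Perm (Fin n) //
      (¬ ∃ i j k : Fin n, i < j ∧ j < k ∧ π i < π k ∧ π k < π j) ∧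
      (∃! t : Fin n × Fin n × Fin n,
        t.1 < t.2.1 ∧ t.2.1 < t.2.2 ∧ π t.1 < π t.2.1 ∧ π t.2.1 < π t.2.2)} =
    (n - 2) * 2 ^ (n - 3) :=
  stmt3_general n
end

section
/- The sequence g defined by g(0) = g(1) = g(2) = 0 and, for n ≥ 3, g(n) = Σ_{i=1}^{n} g(n-i) + Σ_{i=3}^{n-1} (i-2)·2^(n-i-1) + (n-2), satisfies g(n) = (n-2)·2^(n-3) for all n ≥ 3. -/
/-! Writing `S n = ∑_{j < n} g j`, the geometric-type sum in the recurrence together with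
`n - 2` equals `2^(n-2) - 1`, so `g n + 1 = S n + 2^(n-2)` for `n ≥ 3`. Subtracting this at
`n` and `n + 1` gives `g (n+1) = 2 g n + 2^(n-2)`, which together with `g 3 = 1` yields the
closed form by induction. -/

open Finset

lemma sum_Icc_one_sub_eq_sum_range {M : Type*} [AddCommMonoid M] (f : ℕ → M) (n : ℕ) :
    ∑ i ∈ Icc 1 n, f (n - i) = ∑ j ∈ range n, f j := by
  rw [← Ico_add_one_right_eq_Icc, sum_Ico_reflect f 1 le_rfl, Nat.add_sub_cancel, Nat.sub_self,
    range_eq_Ico]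

lemma sum_Icc_sub_two_mul_two_pow_add_eq_two_pow (m : ℕ) :
    ∑ i ∈ Icc 3 (m + 2), (i - 2) * 2 ^ (m + 3 - i - 1) + (m + 1) + 1 = 2 ^ (m + 1) := by
  induction m with
  | zero => simp
  | succ m ih =>
    rw [show m + 1 + 2 = m + 2 + 1 by ring, sum_Icc_succ_top (by omega)]
    have hdouble : ∑ i ∈ Icc 3 (m + 2), (i - 2) * 2 ^ (m + 1 + 3 - i - 1)
        = 2 * ∑ i ∈ Icc 3 (m + 2), (i - 2) * 2 ^ (m + 3 - i - 1) := by
      rw [mul_sum]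
      refine sum_congr rfl fun i hi => ?_
      rw [show m + 1 + 3 - i - 1 = m + 3 - i - 1 + 1 by grind, pow_succ]
      ring
    rw [hdouble, pow_succ]
    simp only [show m + 1 + 3 - (m + 2 + 1) - 1 = 0 by omega, pow_zero]
    omega

/-- The full-history recurrence for 132-avoiding permutations with one 123-pattern
has closed form `(n-2)·2^(n-3)`. -/
theorem stmt4 (g : ℕ → ℕ) (h0 : g 0 = 0) (h1 : g 1 = 0) (h2 : g 2 = 0)
    (hrec : ∀ n, 3 ≤ n → g n = (∑ i ∈ Finset.Icc 1 n, g (n - i)) +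
      (∑ i ∈ Finset.Icc 3 (n - 1), (i - 2) * 2 ^ (n - i - 1)) + (n - 2)) :
    ∀ n, 3 ≤ n → g n = (n - 2) * 2 ^ (n - 3) := by
  have history (m : ℕ) : g (m + 3) + 1 = ∑ j ∈ range (m + 3), g j + 2 ^ (m + 1) := by
    rw [hrec (m + 3) (by omega), sum_Icc_one_sub_eq_sum_range,
      ← sum_Icc_sub_two_mul_two_pow_add_eq_two_pow m]
    simp only [show m + 3 - 1 = m + 2 by omega, show m + 3 - 2 = m + 1 by omega]
    ring
  have base : g 3 = 1 := by
    have h : g 3 + 1 = g 0 + g 1 + g 2 + 2 := by simpa [sum_range_succ] using history 0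
    omega
  have step (m : ℕ) : g (m + 4) = 2 * g (m + 3) + 2 ^ (m + 1) := by
    have h : g (m + 4) + 1 = ∑ j ∈ range (m + 3), g j + g (m + 3) + 2 * 2 ^ (m + 1) := by
      rw [history (m + 1), sum_range_succ, pow_succ']
    have := history m
    omega
  intro n hn
  obtain ⟨m, rfl⟩ := Nat.exists_eq_add_of_le' hn
  simp only [Nat.add_sub_cancel, show m + 3 - 2 = m + 1 by omega]
  induction m with
  | zero => simpa using base
  | succ m ih =>
    rw [step, ih (by omega), pow_succ]
    ring
end

section
/- For all n ≥ 3, the sequences g and h agree, where g(0)=g(1)=g(2)=0, g(n) = Σ_{i=1}^{n} g(n-i) + Σ_{i=3}^{n-1} (i-2)·2^(n-i-1) + (n-2) for n ≥ 3, and h(0)=h(1)=h(2)=0, h(3)=1, h(n) = 4·(h(n-1) - h(n-2)) for n ≥ 4. -/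
/-!
Both sequences equal `(m + 1) * 2 ^ m` at `n = m + 3`. For `h` this is a two-step induction.
For `g`, the first sum is `∑ j < m, (j + 1) * 2 ^ j` by the induction hypothesis and the second,
read backwards, is `∑ j < m, (m - j) * 2 ^ j`; together they give `(m + 1) * (2 ^ m - 1)`,
and the final term `n - 2 = m + 1` completes this to `(m + 1) * 2 ^ m`.
-/

open Finset

theorem Finset.sum_Icc_one_sub {M : Type*} [AddCommMonoid M] (f : ℕ → M) (n : ℕ) :
    ∑ i ∈ Icc 1 n, f (n - i) = ∑ k ∈ range n, f k := by
  rw [← Ico_add_one_right_eq_Icc, sum_Ico_eq_sum_range, Nat.add_sub_cancel, ← sum_range_reflect]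
  exact sum_congr rfl fun i hi => by rw [mem_range] at hi; congr 1; omega

theorem sum_Icc_three_sub_two_mul_two_pow (m : ℕ) :
    ∑ i ∈ Icc 3 (m + 3 - 1), (i - 2) * 2 ^ (m + 3 - i - 1) = ∑ j ∈ range m, (m - j) * 2 ^ j := by
  rw [← Ico_add_one_right_eq_Icc, sum_Ico_eq_sum_range, show m + 3 - 1 + 1 - 3 = m by omega,
    ← sum_range_reflect]
  refine sum_congr rfl fun j hj => ?_
  rw [mem_range] at hj
  rw [show 3 + (m - 1 - j) - 2 = m - j by omega, show m + 3 - (3 + (m - 1 - j)) - 1 = j by omega]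

theorem sum_succ_mul_two_pow_add_sum_sub_mul_two_pow (m : ℕ) :
    ∑ j ∈ range m, (j + 1) * 2 ^ j + ∑ j ∈ range m, (m - j) * 2 ^ j + (m + 1) =
      (m + 1) * 2 ^ m := by
  have hcoeff : ∀ j ∈ range m, (j + 1) * 2 ^ j + (m - j) * 2 ^ j = (m + 1) * 2 ^ j :=
    fun j hj => by rw [← add_mul, show j + 1 + (m - j) = m + 1 by have := mem_range.mp hj; omega]
  rw [← sum_add_distrib, sum_congr rfl hcoeff, ← mul_sum, ← mul_add_one]
  simpa using congrArg ((m + 1) * ·) (geom_sum_mul_add 1 m)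

theorem full_history_rec_eq (g : ℕ → ℕ) (hg0 : g 0 = 0) (hg1 : g 1 = 0) (hg2 : g 2 = 0)
    (hgrec : ∀ n, 3 ≤ n → g n = (∑ i ∈ Icc 1 n, g (n - i)) +
      (∑ i ∈ Icc 3 (n - 1), (i - 2) * 2 ^ (n - i - 1)) + (n - 2)) (m : ℕ) :
    g (m + 3) = (m + 1) * 2 ^ m := by
  induction m using Nat.strong_induction_on with
  | _ m ih =>
    have hhistory : ∑ k ∈ range (m + 3), g k = ∑ j ∈ range m, (j + 1) * 2 ^ j := by
      rw [add_comm m, sum_range_add]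
      simp only [sum_range_succ, sum_range_zero, hg0, hg1, hg2, zero_add]
      exact sum_congr rfl fun j hj => by rw [add_comm 3, ih j (mem_range.mp hj)]
    rw [hgrec (m + 3) (by omega), sum_Icc_one_sub, hhistory, sum_Icc_three_sub_two_mul_two_pow,
      Nat.add_sub_assoc (by norm_num), ← sum_succ_mul_two_pow_add_sum_sub_mul_two_pow]

theorem linear_rec_eq (h : ℕ → ℕ) (hh2 : h 2 = 0) (hh3 : h 3 = 1)
    (hhrec : ∀ n, 4 ≤ n → h n = 4 * (h (n - 1) - h (n - 2))) (m : ℕ) :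
    h (m + 3) = (m + 1) * 2 ^ m := by
  induction m using Nat.twoStepInduction with
  | zero => simpa using hh3
  | one => simpa [hh2, hh3] using hhrec 4 le_rfl
  | more k hk hk1 =>
    have hdiff : (k + 1 + 1) * 2 ^ (k + 1) = (k + 3) * 2 ^ k + (k + 1) * 2 ^ k := by ring
    rw [hhrec (k + 2 + 3) (by omega), show k + 2 + 3 - 1 = k + 1 + 3 by omega,
      show k + 2 + 3 - 2 = k + 3 by omega, hk1, hk, hdiff, Nat.add_sub_cancel]
    ring

theorem stmt6_general (g h : ℕ → ℕ)
    (hg0 : g 0 = 0) (hg1 : g 1 = 0) (hg2 : g 2 = 0)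
    (hgrec : ∀ n, 3 ≤ n → g n = (∑ i ∈ Finset.Icc 1 n, g (n - i)) +
      (∑ i ∈ Finset.Icc 3 (n - 1), (i - 2) * 2 ^ (n - i - 1)) + (n - 2))
    (hh2 : h 2 = 0) (hh3 : h 3 = 1)
    (hhrec : ∀ n, 4 ≤ n → h n = 4 * (h (n - 1) - h (n - 2))) :
    ∀ n, 3 ≤ n → g n = h n := by
  intro n hn
  obtain ⟨m, rfl⟩ : ∃ m, n = m + 3 := ⟨n - 3, by omega⟩
  rw [full_history_rec_eq g hg0 hg1 hg2 hgrec, linear_rec_eq h hh2 hh3 hhrec]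

/-- The full-history recurrence `g` and the second-order linear recurrence `h`
agree for all `n ≥ 3`. -/
theorem stmt6 (g h : ℕ → ℕ)
    (hg0 : g 0 = 0) (hg1 : g 1 = 0) (hg2 : g 2 = 0)
    (hgrec : ∀ n, 3 ≤ n → g n = (∑ i ∈ Finset.Icc 1 n, g (n - i)) +
      (∑ i ∈ Finset.Icc 3 (n - 1), (i - 2) * 2 ^ (n - i - 1)) + (n - 2))
    (hh0 : h 0 = 0) (hh1 : h 1 = 0) (hh2 : h 2 = 0) (hh3 : h 3 = 1)
    (hhrec : ∀ n, 4 ≤ n → h n = 4 * (h (n - 1) - h (n - 2))) :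
    ∀ n, 3 ≤ n → g n = h n :=
  stmt6_general g h hg0 hg1 hg2 hgrec hh2 hh3 hhrec
end

section
/- For n ≥ 3, the number of permutations of length n that avoid the pattern 123 and contain exactly one occurrence of the pattern 132 equals the number of permutations of length n that avoid 132 and contain exactly one occurrence of 123. -/
abbrev Acond {n : ℕ} (π : Equiv.Perm (Fin n)) : Prop :=
  (¬ ∃ i j k : Fin n, i < j ∧ j < k ∧ π i < π j ∧ π j < π k) ∧
  (∃! t : Fin n × Fin n × Fin n,
    t.1 < t.2.1 ∧ t.2.1 < t.2.2 ∧ π t.1 < π t.2.2 ∧ π t.2.2 < π t.2.1)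

abbrev Bcond {n : ℕ} (π : Equiv.Perm (Fin n)) : Prop :=
  (¬ ∃ i j k : Fin n, i < j ∧ j < k ∧ π i < π k ∧ π k < π j) ∧
  (∃! t : Fin n × Fin n × Fin n,
    t.1 < t.2.1 ∧ t.2.1 < t.2.2 ∧ π t.1 < π t.2.1 ∧ π t.2.1 < π t.2.2)

lemma keyA {n : ℕ} (π : Equiv.Perm (Fin n)) (i j k : Fin n)
    (hij : i < j) (hjk : j < k)
    (NA : ¬ ∃ a b c : Fin n, a < b ∧ b < c ∧ π a < π b ∧ π b < π c)
    (O1 : π i < π k) (O2 : π k < π j)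
    (U : ∀ a b c : Fin n, a < b → b < c → π a < π c → π c < π b →
      a = i ∧ b = j ∧ c = k) :
    (¬ ∃ a b c : Fin n, a < b ∧ b < c ∧
        (π * Equiv.swap j k) a < (π * Equiv.swap j k) c ∧
        (π * Equiv.swap j k) c < (π * Equiv.swap j k) b) ∧
    (∀ a b c : Fin n, a < b → b < c →
        (π * Equiv.swap j k) a < (π * Equiv.swap j k) b →
        (π * Equiv.swap j k) b < (π * Equiv.swap j k) c →
        a = i ∧ b = j ∧ c = k) := by
  have NA' : ∀ a b c : Fin n, a < b → b < c → π a < π b → π b < π c → False :=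
    fun a b c h1 h2 h3 h4 => NA ⟨a, b, c, h1, h2, h3, h4⟩
  set σ := π * Equiv.swap j k with hσ
  have sj : σ j = π k := by simp [hσ]
  have sk : σ k = π j := by simp [hσ]
  have so : ∀ x : Fin n, x ≠ j → x ≠ k → σ x = π x := fun x h1 h2 => by
    simp [hσ, Equiv.swap_apply_of_ne_of_ne h1 h2]
  have vlt : ∀ x y : Fin n, x ≠ y → π x < π y ∨ π y < π x :=
    fun x y h => Ne.lt_or_gt fun e => h (π.injective e)
  constructor
  · rintro ⟨a, b, c, hab, hbc, h1, h2⟩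
    rcases eq_or_ne b j with hbj | hbj
    · subst b; have haj : a ≠ j := ne_of_lt hab
      have hak : a ≠ k := ne_of_lt (hab.trans hjk)
      rw [so a haj hak] at h1
      rcases eq_or_ne c k with hck | hck
      · subst c; rw [sk, sj] at h2
        exact absurd h2 (asymm O2)
      · have hcj : c ≠ j := ne_of_gt hbc
        rw [so c hcj hck] at h1
        rw [so c hcj hck, sj] at h2
        rcases lt_or_gt_of_ne hck with h | h
        · exact NA' a c k (hab.trans hbc) h h1 h2
        · exact absurd (U a k c (hab.trans hjk) h h1 h2).2.1 (ne_of_gt hjk)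
    · rcases eq_or_ne a j with haj | haj
      · subst a; rcases eq_or_ne b k with hbk | hbk
        · subst b; have hcj : c ≠ j := ne_of_gt (hjk.trans hbc)
          have hck : c ≠ k := ne_of_gt hbc
          rw [sj, so c hcj hck] at h1
          rw [so c hcj hck, sk] at h2
          exact absurd (U i j c hij (hjk.trans hbc) (O1.trans h1) h2).2.2 (ne_of_gt hbc)
        · rcases eq_or_ne c k with hck | hck
          · subst c; rw [sk, so b hbj (ne_of_lt hbc)] at h2
            exact NA' i j b hij hab (O1.trans O2) h2
          · have hcj : c ≠ j := ne_of_gt (hab.trans hbc)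
            rw [sj, so c hcj hck] at h1
            rw [so c hcj hck, so b hbj hbk] at h2
            exact absurd (U i b c (hij.trans hab) hbc (O1.trans h1) h2).2.1 (ne_of_gt hab)
      · rcases eq_or_ne c j with hcj | hcj
        · subst c; have hak : a ≠ k := ne_of_lt ((hab.trans hbc).trans hjk)
          have hbk : b ≠ k := ne_of_lt (hbc.trans hjk)
          rw [so a haj hak, sj] at h1
          rw [sj, so b hbj hbk] at h2
          exact absurd (U a b k hab (hbc.trans hjk) h1 h2).2.1 (ne_of_lt hbc)
        · rcases eq_or_ne a k with hak | hak
          · subst a; have hbk : b ≠ k := ne_of_gt hab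
            have hck : c ≠ k := ne_of_gt (hab.trans hbc)
            rw [sk, so c hcj hck] at h1
            rw [so c hcj hck, so b hbj hbk] at h2
            exact absurd (U i b c (hij.trans (hjk.trans hab)) hbc
              (O1.trans (O2.trans h1)) h2).2.1 (ne_of_gt (hjk.trans hab))
          · rcases eq_or_ne b k with hbk | hbk
            · subst b; have hck : c ≠ k := ne_of_gt hbc
              rw [so a haj hak, so c hcj hck] at h1
              rw [so c hcj hck, sk] at h2
              rcases lt_or_gt_of_ne haj with hja | hja
              · exact absurd (U a j c hja (hjk.trans hbc) h1 h2).2.2 (ne_of_gt hbc)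
              · rcases vlt i c (ne_of_lt (hij.trans (hjk.trans hbc))) with h | h
                · exact absurd (U i j c hij (hjk.trans hbc) h h2).2.2 (ne_of_gt hbc)
                · exact absurd (U a k c hab hbc h1 (h.trans O1)).2.1 (ne_of_gt hjk)
            · rcases eq_or_ne c k with hck | hck
              · subst c; rw [so a haj hak, sk] at h1
                rw [sk, so b hbj hbk] at h2
                rcases lt_or_gt_of_ne hbj with hb | hb
                · exact absurd (U a b j hab hb h1 h2).2.1 (ne_of_lt hb)
                · exact NA' i j b hij hb (O1.trans O2) h2
              · rw [so a haj hak, so c hcj hck] at h1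
                rw [so c hcj hck, so b hbj hbk] at h2
                exact absurd (U a b c hab hbc h1 h2).2.1 hbj
  · intro a b c hab hbc h1 h2
    rcases eq_or_ne b j with hbj | hbj
    · subst b; have haj : a ≠ j := ne_of_lt hab
      have hak : a ≠ k := ne_of_lt (hab.trans hjk)
      rw [so a haj hak, sj] at h1
      rcases eq_or_ne c k with hck | hck
      · subst c; exact ⟨(U a j k hab hjk h1 O2).1, rfl, rfl⟩
      · have hcj : c ≠ j := ne_of_gt hbc
        rw [sj, so c hcj hck] at h2
        rcases lt_or_gt_of_ne hck with h | h
        · exact absurd (U a c k (hab.trans hbc) h h1 h2).2.1 (ne_of_gt hbc)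
        · exact absurd (NA' a k c (hab.trans hjk) h h1 h2) id
    · rcases eq_or_ne a j with haj | haj
      · subst a; rcases eq_or_ne b k with hbk | hbk
        · subst b; have hcj : c ≠ j := ne_of_gt (hjk.trans hbc)
          rw [sk, so c hcj (ne_of_gt hbc)] at h2
          exact absurd (NA' i j c hij (hjk.trans hbc) (O1.trans O2) h2) id
        · rcases eq_or_ne c k with hck | hck
          · subst c; rw [sj, so b hbj hbk] at h1
            rw [so b hbj hbk, sk] at h2
            exact absurd (U i b k (hij.trans hab) hbc O1 h1).2.1 (ne_of_gt hab)
          · have hcj : c ≠ j := ne_of_gt (hab.trans hbc)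
            rw [sj, so b hbj hbk] at h1
            rw [so b hbj hbk, so c hcj hck] at h2
            exact absurd (NA' i b c (hij.trans hab) hbc (O1.trans h1) h2) id
      · rcases eq_or_ne c j with hcj | hcj
        · subst c; have hak : a ≠ k := ne_of_lt ((hab.trans hbc).trans hjk)
          have hbk : b ≠ k := ne_of_lt (hbc.trans hjk)
          rw [so a haj hak, so b hbj hbk] at h1
          rw [so b hbj hbk, sj] at h2
          exact absurd (NA' a b j hab hbc h1 (h2.trans O2)) id
        · rcases eq_or_ne a k with hak | hak
          · subst a; have hbk : b ≠ k := ne_of_gt hab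
            have hck : c ≠ k := ne_of_gt (hab.trans hbc)
            rw [sk, so b hbj hbk] at h1
            rw [so b hbj hbk, so c hcj hck] at h2
            exact absurd (NA' i b c (hij.trans (hjk.trans hab)) hbc
              (O1.trans (O2.trans h1)) h2) id
          · rcases eq_or_ne b k with hbk | hbk
            · subst b; have hck : c ≠ k := ne_of_gt hbc
              rw [so a haj hak, sk] at h1
              rw [sk, so c hcj hck] at h2
              exact absurd (NA' i j c hij (hjk.trans hbc) (O1.trans O2) h2) id
            · rcases eq_or_ne c k with hck | hck
              · subst c; rw [so a haj hak, so b hbj hbk] at h1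
                rw [so b hbj hbk, sk] at h2
                rcases lt_or_gt_of_ne hbj with hb | hb
                · exact absurd (NA' a b j hab hb h1 h2) id
                · rcases vlt b k hbk with h | h
                  · exact absurd (NA' a b k hab hbc h1 h) id
                  · rcases lt_or_gt_of_ne haj with ha | ha
                    · exact absurd (U a j b ha hb h1 h2).2.2 (ne_of_lt hbc)
                    · rcases vlt a k hak with h' | h'
                      · exact absurd (U a b k hab hbc h' h).2.1 (ne_of_gt hb)
                      · exact absurd (NA' i a b (hij.trans ha) hab (O1.trans h') h1) id
              · rw [so a haj hak, so b hbj hbk] at h1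
                rw [so b hbj hbk, so c hcj hck] at h2
                exact absurd (NA' a b c hab hbc h1 h2) id

lemma keyB {n : ℕ} (π : Equiv.Perm (Fin n)) (i j k : Fin n)
    (hij : i < j) (hjk : j < k)
    (NB : ¬ ∃ a b c : Fin n, a < b ∧ b < c ∧ π a < π c ∧ π c < π b)
    (O1 : π i < π j) (O2 : π j < π k)
    (U : ∀ a b c : Fin n, a < b → b < c → π a < π b → π b < π c →
      a = i ∧ b = j ∧ c = k) :
    (¬ ∃ a b c : Fin n, a < b ∧ b < c ∧
        (π * Equiv.swap j k) a < (π * Equiv.swap j k) b ∧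
        (π * Equiv.swap j k) b < (π * Equiv.swap j k) c) ∧
    (∀ a b c : Fin n, a < b → b < c →
        (π * Equiv.swap j k) a < (π * Equiv.swap j k) c →
        (π * Equiv.swap j k) c < (π * Equiv.swap j k) b →
        a = i ∧ b = j ∧ c = k) := by
  have NB' : ∀ a b c : Fin n, a < b → b < c → π a < π c → π c < π b → False :=
    fun a b c h1 h2 h3 h4 => NB ⟨a, b, c, h1, h2, h3, h4⟩
  set σ := π * Equiv.swap j k with hσ
  have sj : σ j = π k := by simp [hσ]
  have sk : σ k = π j := by simp [hσ]
  have so : ∀ x : Fin n, x ≠ j → x ≠ k → σ x = π x := fun x h1 h2 => by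
    simp [hσ, Equiv.swap_apply_of_ne_of_ne h1 h2]
  have vlt : ∀ x y : Fin n, x ≠ y → π x < π y ∨ π y < π x :=
    fun x y h => Ne.lt_or_gt fun e => h (π.injective e)
  constructor
  · rintro ⟨a, b, c, hab, hbc, h1, h2⟩
    rcases eq_or_ne b j with hbj | hbj
    · subst b; have haj : a ≠ j := ne_of_lt hab
      have hak : a ≠ k := ne_of_lt (hab.trans hjk)
      rw [so a haj hak, sj] at h1
      rcases eq_or_ne c k with hck | hck
      · subst c; rw [sj, sk] at h2
        exact absurd h2 (asymm O2)
      · have hcj : c ≠ j := ne_of_gt hbc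
        rw [sj, so c hcj hck] at h2
        rcases lt_or_gt_of_ne hck with h | h
        · exact NB' a c k (hab.trans hbc) h h1 h2
        · exact absurd (U a k c (hab.trans hjk) h h1 h2).2.1 (ne_of_gt hjk)
    · rcases eq_or_ne a j with haj | haj
      · subst a; rcases eq_or_ne b k with hbk | hbk
        · subst b; rw [sj, sk] at h1
          exact absurd h1 (asymm O2)
        · rcases eq_or_ne c k with hck | hck
          · subst c; rw [sj, so b hbj hbk] at h1
            rw [so b hbj hbk, sk] at h2
            exact absurd (h1.trans h2) (asymm O2)
          · have hcj : c ≠ j := ne_of_gt (hab.trans hbc)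
            rw [sj, so b hbj hbk] at h1
            rw [so b hbj hbk, so c hcj hck] at h2
            exact absurd (U i b c (hij.trans hab) hbc (O1.trans (O2.trans h1)) h2).2.1
              (ne_of_gt hab)
      · rcases eq_or_ne c j with hcj | hcj
        · subst c; have hak : a ≠ k := ne_of_lt ((hab.trans hbc).trans hjk)
          have hbk : b ≠ k := ne_of_lt (hbc.trans hjk)
          rw [so a haj hak, so b hbj hbk] at h1
          rw [so b hbj hbk, sj] at h2
          exact absurd (U a b k hab (hbc.trans hjk) h1 h2).2.1 (ne_of_lt hbc)
        · rcases eq_or_ne a k with hak | hak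
          · subst a; have hbk : b ≠ k := ne_of_gt hab
            have hck : c ≠ k := ne_of_gt (hab.trans hbc)
            rw [sk, so b hbj hbk] at h1
            rw [so b hbj hbk, so c hcj hck] at h2
            exact absurd (U i b c (hij.trans (hjk.trans hab)) hbc (O1.trans h1) h2).2.1
              (ne_of_gt (hjk.trans hab))
          · rcases eq_or_ne b k with hbk | hbk
            · subst b; have hck : c ≠ k := ne_of_gt hbc
              rw [so a haj hak, sk] at h1
              rw [sk, so c hcj hck] at h2
              rcases lt_or_gt_of_ne haj with ha | ha
              · exact absurd (U a j c ha (hjk.trans hbc) h1 h2).2.2 (ne_of_gt hbc)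
              · rcases vlt i a (ne_of_lt (hij.trans ha)) with h | h
                · exact absurd (U i a c (hij.trans ha) (hab.trans hbc) h
                    (h1.trans h2)).2.1 (ne_of_gt ha)
                · rcases vlt c k (ne_of_gt hbc) with h' | h'
                  · exact NB' a k c hab hbc (h1.trans h2) h'
                  · exact absurd (U a k c hab hbc (h.trans (O1.trans O2)) h').2.1
                      (ne_of_gt hjk)
            · rcases eq_or_ne c k with hck | hck
              · subst c; rw [so a haj hak, so b hbj hbk] at h1
                rw [so b hbj hbk, sk] at h2
                rcases lt_or_gt_of_ne hbj with hb | hb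
                · exact absurd (U a b j hab hb h1 h2).2.2 (ne_of_lt hjk)
                · rcases vlt i b (ne_of_lt (hij.trans hb)) with h | h
                  · exact NB' i j b hij hb h h2
                  · exact absurd (U a b k hab hbc h1 (h.trans (O1.trans O2))).2.1
                      (ne_of_gt hb)
              · rw [so a haj hak, so b hbj hbk] at h1
                rw [so b hbj hbk, so c hcj hck] at h2
                exact absurd (U a b c hab hbc h1 h2).2.1 hbj
  · intro a b c hab hbc h1 h2
    rcases eq_or_ne b j with hbj | hbj
    · subst b; have haj : a ≠ j := ne_of_lt hab
      have hak : a ≠ k := ne_of_lt (hab.trans hjk)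
      rw [so a haj hak] at h1
      rcases eq_or_ne c k with hck | hck
      · subst c; rw [sk] at h1
        exact ⟨(U a j k hab hjk h1 O2).1, rfl, rfl⟩
      · have hcj : c ≠ j := ne_of_gt hbc
        rw [so c hcj hck] at h1
        rw [so c hcj hck, sj] at h2
        rcases lt_or_gt_of_ne hck with h | h
        · exact absurd (U a c k (hab.trans hbc) h h1 h2).2.1 (ne_of_gt hbc)
        · exact absurd (NB' a k c (hab.trans hjk) h h1 h2) id
    · rcases eq_or_ne a j with haj | haj
      · subst a; rcases eq_or_ne b k with hbk | hbk
        · subst b; have hcj : c ≠ j := ne_of_gt (hjk.trans hbc)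
          have hck : c ≠ k := ne_of_gt hbc
          rw [sj, so c hcj hck] at h1
          rw [so c hcj hck, sk] at h2
          exact absurd (h1.trans h2) (asymm O2)
        · rcases eq_or_ne c k with hck | hck
          · subst c; rw [sj, sk] at h1
            exact absurd h1 (asymm O2)
          · have hcj : c ≠ j := ne_of_gt (hab.trans hbc)
            rw [sj, so c hcj hck] at h1
            rw [so c hcj hck, so b hbj hbk] at h2
            exact absurd (NB' i b c (hij.trans hab) hbc (O1.trans (O2.trans h1)) h2) id
      · rcases eq_or_ne c j with hcj | hcj
        · subst c; have hak : a ≠ k := ne_of_lt ((hab.trans hbc).trans hjk)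
          have hbk : b ≠ k := ne_of_lt (hbc.trans hjk)
          rw [so a haj hak, sj] at h1
          rw [sj, so b hbj hbk] at h2
          exact absurd (NB' a b k hab (hbc.trans hjk) h1 h2) id
        · rcases eq_or_ne a k with hak | hak
          · subst a; have hbk : b ≠ k := ne_of_gt hab
            have hck : c ≠ k := ne_of_gt (hab.trans hbc)
            rw [sk, so c hcj hck] at h1
            rw [so c hcj hck, so b hbj hbk] at h2
            exact absurd (NB' i b c (hij.trans (hjk.trans hab)) hbc (O1.trans h1) h2) id
          · rcases eq_or_ne b k with hbk | hbk
            · subst b; have hck : c ≠ k := ne_of_gt hbc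
              rw [so a haj hak, so c hcj hck] at h1
              rw [so c hcj hck, sk] at h2
              exact absurd (NB' a k c hab hbc h1 (h2.trans O2)) id
            · rcases eq_or_ne c k with hck | hck
              · subst c; rw [so a haj hak, sk] at h1
                rw [sk, so b hbj hbk] at h2
                rcases lt_or_gt_of_ne hbj with hb | hb
                · exact absurd (NB' a b j hab hb h1 h2) id
                · exact absurd (U i j b hij hb O1 h2).2.2 (ne_of_lt hbc)
              · rw [so a haj hak, so c hcj hck] at h1
                rw [so c hcj hck, so b hbj hbk] at h2
                exact absurd (NB' a b c hab hbc h1 h2) id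

lemma toB {n : ℕ} (π : Equiv.Perm (Fin n)) (h : Acond π) (i j k : Fin n)
    (he : h.2.choose = (i, j, k)) : Bcond (π * Equiv.swap j k) := by
  have spec := h.2.choose_spec
  rw [he] at spec
  obtain ⟨⟨h1, h2, h3, h4⟩, hu⟩ := spec
  have U : ∀ a b c : Fin n, a < b → b < c → π a < π c → π c < π b →
      a = i ∧ b = j ∧ c = k := by
    intro a b c u1 u2 u3 u4
    have e := hu (a, b, c) ⟨u1, u2, u3, u4⟩
    rw [Prod.ext_iff, Prod.ext_iff] at e
    exact ⟨e.1, e.2.1, e.2.2⟩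
  have key := keyA π i j k h1 h2 h.1 h3 h4 U
  refine ⟨key.1, ⟨(i, j, k), ⟨h1, h2, ?_, ?_⟩, ?_⟩⟩
  · show (π * Equiv.swap j k) i < (π * Equiv.swap j k) j
    rw [Equiv.Perm.mul_apply, Equiv.Perm.mul_apply,
      Equiv.swap_apply_of_ne_of_ne (ne_of_lt h1) (ne_of_lt (h1.trans h2)),
      Equiv.swap_apply_left]
    exact h3
  · show (π * Equiv.swap j k) j < (π * Equiv.swap j k) k
    rw [Equiv.Perm.mul_apply, Equiv.Perm.mul_apply, Equiv.swap_apply_left,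
      Equiv.swap_apply_right]
    exact h4
  · rintro ⟨a, b, c⟩ ⟨u1, u2, u3, u4⟩
    obtain ⟨e1, e2, e3⟩ := key.2 a b c u1 u2 u3 u4
    simp [Prod.ext_iff, e1, e2, e3]

lemma toA {n : ℕ} (π : Equiv.Perm (Fin n)) (h : Bcond π) (i j k : Fin n)
    (he : h.2.choose = (i, j, k)) : Acond (π * Equiv.swap j k) := by
  have spec := h.2.choose_spec
  rw [he] at spec
  obtain ⟨⟨h1, h2, h3, h4⟩, hu⟩ := spec
  have U : ∀ a b c : Fin n, a < b → b < c → π a < π b → π b < π c →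
      a = i ∧ b = j ∧ c = k := by
    intro a b c u1 u2 u3 u4
    have e := hu (a, b, c) ⟨u1, u2, u3, u4⟩
    rw [Prod.ext_iff, Prod.ext_iff] at e
    exact ⟨e.1, e.2.1, e.2.2⟩
  have key := keyB π i j k h1 h2 h.1 h3 h4 U
  refine ⟨key.1, ⟨(i, j, k), ⟨h1, h2, ?_, ?_⟩, ?_⟩⟩
  · show (π * Equiv.swap j k) i < (π * Equiv.swap j k) k
    rw [Equiv.Perm.mul_apply, Equiv.Perm.mul_apply,
      Equiv.swap_apply_of_ne_of_ne (ne_of_lt h1) (ne_of_lt (h1.trans h2)),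
      Equiv.swap_apply_right]
    exact h3
  · show (π * Equiv.swap j k) k < (π * Equiv.swap j k) j
    rw [Equiv.Perm.mul_apply, Equiv.Perm.mul_apply, Equiv.swap_apply_left,
      Equiv.swap_apply_right]
    exact h4
  · rintro ⟨a, b, c⟩ ⟨u1, u2, u3, u4⟩
    obtain ⟨e1, e2, e3⟩ := key.2 a b c u1 u2 u3 u4
    simp [Prod.ext_iff, e1, e2, e3]

lemma chooseBeq {n : ℕ} (π : Equiv.Perm (Fin n)) (h : Acond π) (i j k : Fin n)
    (he : h.2.choose = (i, j, k)) (hB : Bcond (π * Equiv.swap j k)) :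
    hB.2.choose = h.2.choose := by
  have spec := h.2.choose_spec
  rw [he] at spec
  obtain ⟨⟨h1, h2, h3, h4⟩, hu⟩ := spec
  have U : ∀ a b c : Fin n, a < b → b < c → π a < π c → π c < π b →
      a = i ∧ b = j ∧ c = k := by
    intro a b c u1 u2 u3 u4
    have e := hu (a, b, c) ⟨u1, u2, u3, u4⟩
    rw [Prod.ext_iff, Prod.ext_iff] at e
    exact ⟨e.1, e.2.1, e.2.2⟩
  have key := keyA π i j k h1 h2 h.1 h3 h4 U
  obtain ⟨u1, u2, u3, u4⟩ := hB.2.choose_spec.1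
  obtain ⟨e1, e2, e3⟩ := key.2 _ _ _ u1 u2 u3 u4
  rw [he]
  rw [Prod.ext_iff, Prod.ext_iff]
  exact ⟨e1, e2, e3⟩

lemma chooseAeq {n : ℕ} (π : Equiv.Perm (Fin n)) (h : Bcond π) (i j k : Fin n)
    (he : h.2.choose = (i, j, k)) (hA : Acond (π * Equiv.swap j k)) :
    hA.2.choose = h.2.choose := by
  have spec := h.2.choose_spec
  rw [he] at spec
  obtain ⟨⟨h1, h2, h3, h4⟩, hu⟩ := spec
  have U : ∀ a b c : Fin n, a < b → b < c → π a < π b → π b < π c →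
      a = i ∧ b = j ∧ c = k := by
    intro a b c u1 u2 u3 u4
    have e := hu (a, b, c) ⟨u1, u2, u3, u4⟩
    rw [Prod.ext_iff, Prod.ext_iff] at e
    exact ⟨e.1, e.2.1, e.2.2⟩
  have key := keyB π i j k h1 h2 h.1 h3 h4 U
  obtain ⟨u1, u2, u3, u4⟩ := hA.2.choose_spec.1
  obtain ⟨e1, e2, e3⟩ := key.2 _ _ _ u1 u2 u3 u4
  rw [he]
  rw [Prod.ext_iff, Prod.ext_iff]
  exact ⟨e1, e2, e3⟩

/-- For `n ≥ 3`, the number of permutations avoiding 123 with exactly one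
132-occurrence equals the number of permutations avoiding 132 with exactly one
123-occurrence. -/
theorem stmt7 (n : ℕ) (hn : 3 ≤ n) :
    Nat.card {π : Equiv.Perm (Fin n) //
      (¬ ∃ i j k : Fin n, i < j ∧ j < k ∧ π i < π j ∧ π j < π k) ∧
      (∃! t : Fin n × Fin n × Fin n,
        t.1 < t.2.1 ∧ t.2.1 < t.2.2 ∧ π t.1 < π t.2.2 ∧ π t.2.2 < π t.2.1)} =
    Nat.card {π : Equiv.Perm (Fin n) //
      (¬ ∃ i j k : Fin n, i < j ∧ j < k ∧ π i < π k ∧ π k < π j) ∧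
      (∃! t : Fin n × Fin n × Fin n,
        t.1 < t.2.1 ∧ t.2.1 < t.2.2 ∧ π t.1 < π t.2.1 ∧ π t.2.1 < π t.2.2)} := by
  refine Nat.card_congr
    ⟨fun x => ⟨x.1 * Equiv.swap x.2.2.choose.2.1 x.2.2.choose.2.2,
        toB x.1 x.2 x.2.2.choose.1 x.2.2.choose.2.1 x.2.2.choose.2.2 rfl⟩,
      fun y => ⟨y.1 * Equiv.swap y.2.2.choose.2.1 y.2.2.choose.2.2,
        toA y.1 y.2 y.2.2.choose.1 y.2.2.choose.2.1 y.2.2.choose.2.2 rfl⟩, ?_, ?_⟩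
  · intro x
    apply Subtype.ext
    show x.1 * Equiv.swap x.2.2.choose.2.1 x.2.2.choose.2.2 *
      Equiv.swap _ _ = x.1
    rw [chooseBeq x.1 x.2 x.2.2.choose.1 x.2.2.choose.2.1 x.2.2.choose.2.2 rfl]
    · rw [mul_assoc, Equiv.swap_mul_self, mul_one]
    · exact toB x.1 x.2 x.2.2.choose.1 x.2.2.choose.2.1 x.2.2.choose.2.2 rfl
  · intro y
    apply Subtype.ext
    show y.1 * Equiv.swap y.2.2.choose.2.1 y.2.2.choose.2.2 *
      Equiv.swap _ _ = y.1
    rw [chooseAeq y.1 y.2 y.2.2.choose.1 y.2.2.choose.2.1 y.2.2.choose.2.2 rfl]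
    · rw [mul_assoc, Equiv.swap_mul_self, mul_one]
    · exact toA y.1 y.2 y.2.2.choose.1 y.2.2.choose.2.1 y.2.2.choose.2.2 rfl
end

section
/- Let s be a permutation of {1,...,n} avoiding 132 and with a unique 123-occurrence at positions i < j < k (so s(i) < s(j) < s(k)). Define t by swapping the values at positions j and k: t(j) = s(k), t(k) = s(j), and t = s elsewhere. Then t avoids 123 and contains exactly one 132-occurrence. -/
/-- If `s` avoids 132 and has a unique 123-occurrence at `i < j < k`, then the
permutation `t` obtained by swapping the values at positions `j` and `k`
avoids 123 and has exactly one 132-occurrence. -/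
theorem stmt9 (n : ℕ) (s : Equiv.Perm (Fin n)) (i j k : Fin n)
    (havoid : ¬ ∃ a b c : Fin n, a < b ∧ b < c ∧ s a < s c ∧ s c < s b)
    (hocc : i < j ∧ j < k ∧ s i < s j ∧ s j < s k)
    (huniq : ∀ a b c : Fin n, a < b → b < c → s a < s b → s b < s c →
      a = i ∧ b = j ∧ c = k) :
    (¬ ∃ a b c : Fin n, a < b ∧ b < c ∧
        (s.trans (Equiv.swap (s j) (s k))) a < (s.trans (Equiv.swap (s j) (s k))) b ∧
        (s.trans (Equiv.swap (s j) (s k))) b < (s.trans (Equiv.swap (s j) (s k))) c) ∧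
    (∃! t : Fin n × Fin n × Fin n, t.1 < t.2.1 ∧ t.2.1 < t.2.2 ∧
        (s.trans (Equiv.swap (s j) (s k))) t.1 < (s.trans (Equiv.swap (s j) (s k))) t.2.2 ∧
        (s.trans (Equiv.swap (s j) (s k))) t.2.2 < (s.trans (Equiv.swap (s j) (s k))) t.2.1) := by
  obtain ⟨hij, hjk, hsij, hsjk⟩ := hocc
  set t := s.trans (Equiv.swap (s j) (s k)) with ht
  have htj : t j = s k := by simp [ht, Equiv.trans_apply]
  have htk : t k = s j := by simp [ht, Equiv.trans_apply]
  have hto : ∀ a : Fin n, a ≠ j → a ≠ k → t a = s a := by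
    intro a haj hak
    simp [ht, Equiv.trans_apply,
      Equiv.swap_apply_of_ne_of_ne (fun h => haj (s.injective h))
        (fun h => hak (s.injective h))]
  constructor
  · rintro ⟨a, b, c, hab, hbc, h1, h2⟩
    by_cases haj : a = j
    · subst haj
      by_cases hbk : b = k
      · subst hbk
        rw [htj, htk] at h1
        exact absurd h1 (not_lt.2 hsjk.le)
      · have hbj : b ≠ a := hab.ne'
        rw [htj, hto b hbj hbk] at h1
        by_cases hck : c = k
        · subst hck
          rw [htk, hto b hbj hbk] at h2
          exact absurd (h1.trans h2) (not_lt.2 hsjk.le)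
        · have hcj : c ≠ a := (hab.trans hbc).ne'
          rw [hto b hbj hbk, hto c hcj hck] at h2
          obtain ⟨hji, _, _⟩ := huniq a b c hab hbc (hsjk.trans h1) h2
          rw [hji] at hij; exact lt_irrefl _ hij
    · by_cases hak : a = k
      · subst hak
        have hbk : b ≠ a := hab.ne'
        have hbj : b ≠ j := fun h => absurd (h ▸ hab) (not_lt.2 hjk.le)
        have hck : c ≠ a := (hab.trans hbc).ne'
        have hcj : c ≠ j := fun h => absurd (h ▸ (hab.trans hbc)) (not_lt.2 hjk.le)
        rw [htk, hto b hbj hbk] at h1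
        rw [hto b hbj hbk, hto c hcj hck] at h2
        obtain ⟨hji, _, _⟩ := huniq j b c (hjk.trans hab) hbc h1 h2
        rw [hji] at hij; exact lt_irrefl _ hij
      · rw [hto a haj hak] at h1
        by_cases hbj : b = j
        · subst hbj
          rw [htj] at h1 h2
          by_cases hck : c = k
          · subst hck
            rw [htk] at h2
            exact absurd h2 (not_lt.2 hsjk.le)
          · have hcj : c ≠ b := hbc.ne'
            rw [hto c hcj hck] at h2
            rcases lt_or_gt_of_ne hck with hck' | hck'
            · exact havoid ⟨a, c, k, hab.trans hbc, hck', h1, h2⟩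
            · obtain ⟨_, hkj, _⟩ := huniq a k c (hab.trans hjk) hck' h1 h2
              rw [hkj] at hjk; exact lt_irrefl _ hjk
        · by_cases hbk : b = k
          · subst hbk
            have hcj : c ≠ j := fun h => absurd (h ▸ hbc) (not_lt.2 hjk.le)
            rw [htk] at h1 h2
            rw [hto c hcj hbc.ne'] at h2
            have hsk : s b ≠ s c := fun h => hbc.ne (s.injective h)
            rcases lt_or_gt_of_ne hsk with h' | h'
            · obtain ⟨_, _, hck⟩ := huniq j b c hjk hbc hsjk h'
              rw [hck] at hbc; exact lt_irrefl _ hbc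
            · exact havoid ⟨a, b, c, hab, hbc, h1.trans h2, h'⟩
          · rw [hto b hbj hbk] at h1 h2
            by_cases hcj : c = j
            · subst hcj
              rw [htj] at h2
              obtain ⟨_, hbj', _⟩ := huniq a b k hab (hbc.trans hjk) h1 h2
              exact hbj hbj'
            · by_cases hck : c = k
              · subst hck
                rw [htk] at h2
                obtain ⟨_, hbj', _⟩ := huniq a b c hab hbc h1 (h2.trans hsjk)
                exact hbj hbj'
              · rw [hto c hcj hck] at h2
                obtain ⟨_, hbj', _⟩ := huniq a b c hab hbc h1 h2
                exact hbj hbj'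
  · refine ⟨(i, j, k), ⟨hij, hjk, ?_, ?_⟩, ?_⟩
    · rw [hto i hij.ne (hij.trans hjk).ne, htk]; exact hsij
    · rw [htk, htj]; exact hsjk
    · rintro ⟨a, b, c⟩ ⟨hab, hbc, h1, h2⟩
      simp only at hab hbc h1 h2 ⊢
      by_cases haj : a = j
      · subst haj
        by_cases hck : c = k
        · subst hck
          rw [htj, htk] at *
          exact absurd h1 (not_lt.2 hsjk.le)
        · have hcj : c ≠ a := (hab.trans hbc).ne'
          have hbj : b ≠ a := hab.ne'
          by_cases hbk : b = k
          · subst hbk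
            rw [htj, hto c hcj hck] at h1
            rw [htk, hto c hcj hck] at h2
            exact absurd (h1.trans h2) (not_lt.2 hsjk.le)
          · rw [htj, hto c hcj hck] at h1
            rw [hto c hcj hck, hto b hbj hbk] at h2
            exact (havoid ⟨a, b, c, hab, hbc, hsjk.trans h1, h2⟩).elim
      · by_cases hak : a = k
        · subst hak
          have hbk : b ≠ a := hab.ne'
          have hbj : b ≠ j := fun h => absurd (h ▸ hab) (not_lt.2 hjk.le)
          have hck : c ≠ a := (hab.trans hbc).ne'
          have hcj : c ≠ j := fun h => absurd (h ▸ (hab.trans hbc)) (not_lt.2 hjk.le)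
          rw [htk, hto c hcj hck] at h1
          rw [hto c hcj hck, hto b hbj hbk] at h2
          exact (havoid ⟨j, b, c, hjk.trans hab, hbc, h1, h2⟩).elim
        · rw [hto a haj hak] at h1
          by_cases hbj : b = j
          · subst hbj
            by_cases hck : c = k
            · subst hck
              rw [htk] at h1
              obtain ⟨hai, _, _⟩ := huniq a b c hab hbc h1 hsjk
              rw [hai]
            · have hcj : c ≠ b := hbc.ne'
              rw [hto c hcj hck] at h1
              rw [hto c hcj hck, htj] at h2
              rcases lt_or_gt_of_ne hck with hck' | hck'
              · obtain ⟨_, hcj', _⟩ := huniq a c k (hab.trans hbc) hck' h1 h2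
                rw [hcj'] at hbc; exact (lt_irrefl _ hbc).elim
              · exact (havoid ⟨a, k, c, hab.trans hjk, hck', h1, h2⟩).elim
          · by_cases hbk : b = k
            · subst hbk
              have hcj : c ≠ j := fun h => absurd (h ▸ hbc) (not_lt.2 hjk.le)
              rw [hto c hcj hbc.ne'] at h1 h2
              rw [htk] at h2
              exact (havoid ⟨a, b, c, hab, hbc, h1, h2.trans hsjk⟩).elim
            · by_cases hcj : c = j
              · subst hcj
                have hbc' : b < k := hbc.trans hjk
                rw [htj] at h1 h2
                rw [hto b hbj hbk] at h2
                exact (havoid ⟨a, b, k, hab, hbc', h1, h2⟩).elim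
              · by_cases hck : c = k
                · subst hck
                  rw [htk] at h1 h2
                  rw [hto b hbj hbk] at h2
                  rcases lt_or_gt_of_ne hbj with hbj' | hbj'
                  · exact (havoid ⟨a, b, j, hab, hbj', h1, h2⟩).elim
                  · have hsbk : s b ≠ s c := fun h => (hbc.ne) (s.injective h)
                    rcases lt_or_gt_of_ne hsbk with h' | h'
                    · obtain ⟨hji, _, _⟩ := huniq j b c hbj' hbc h2 h'
                      rw [hji] at hij; exact (lt_irrefl _ hij).elim
                    · exact (havoid ⟨j, b, c, hbj', hbc, hsjk, h'⟩).elim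
                · rw [hto c hcj hck] at h1 h2
                  rw [hto b hbj hbk] at h2
                  exact (havoid ⟨a, b, c, hab, hbc, h1, h2⟩).elim
end

section
/- For n ≥ 5, the number of permutations of length n that contain exactly one occurrence of the pattern 123 and exactly one occurrence of the pattern 132 is (n-3)·(n-4)·2^(n-5). -/
open Finset

namespace Stmt10Aux

variable {n : ℕ}

/-- positions after `i` with larger value -/
def B (π : Equiv.Perm (Fin n)) (i : Fin n) : Finset (Fin n) :=
  univ.filter fun j => i < j ∧ π i < π j

/-- the code entry at `i` -/
def rr (π : Equiv.Perm (Fin n)) (i : Fin n) : ℕ := (B π i).card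

def codeF (π : Equiv.Perm (Fin n)) : Fin n → ℕ := fun i => rr π i

lemma mem_B {π : Equiv.Perm (Fin n)} {i j : Fin n} :
    j ∈ B π i ↔ i < j ∧ π i < π j := by simp [B]

lemma card_univ_filter_lt (i : Fin n) :
    (univ.filter fun j : Fin n => i < j).card = n - 1 - i := by
  have h : (univ.filter fun j : Fin n => i < j) = Finset.Ioi i := by
    ext j; simp
  rw [h, Fin.card_Ioi]

lemma rr_le (π : Equiv.Perm (Fin n)) (i : Fin n) : rr π i ≤ n - 1 - i := by
  rw [← card_univ_filter_lt i]
  exact Finset.card_le_card (fun j hj => by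
    simp only [mem_filter, mem_univ, true_and] at *
    exact ((mem_B).1 hj).1)

lemma card_filter_apply_lt (π : Equiv.Perm (Fin n)) (x : Fin n) :
    (univ.filter fun j => x < π j).card = n - 1 - (x : ℕ) := by
  have h1 : (univ.filter fun j => x < π j).card = (univ.filter fun v : Fin n => x < v).card := by
    apply Finset.card_bij (fun j _ => π j)
    · intro a ha; simp only [mem_filter, mem_univ, true_and] at *; exact ha
    · intro a _ b _ h; exact π.injective h
    · intro v hv; exact ⟨π.symm v, by simpa using (mem_filter.1 hv).2, by simp⟩
  have h2 : (univ.filter fun v : Fin n => x < v) = Finset.Ioi x := by ext j; simp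
  rw [h1, h2, Fin.card_Ioi]

/-- key identity: code entry determines value given earlier larger count -/
lemma key (π : Equiv.Perm (Fin n)) (i : Fin n) :
    rr π i + (univ.filter fun j => j < i ∧ π i < π j).card + (π i : ℕ) = n - 1 := by
  have hsplit : (univ.filter fun j => π i < π j)
      = B π i ∪ (univ.filter fun j => j < i ∧ π i < π j) := by
    ext j
    simp only [B, mem_filter, mem_union, mem_univ, true_and]
    constructor
    · intro h
      rcases lt_trichotomy i j with h' | h' | h'
      · exact Or.inl ⟨h', h⟩
      · exact absurd h (by rw [h']; exact lt_irrefl _)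
      · exact Or.inr ⟨h', h⟩
    · rintro (⟨_, h⟩ | ⟨_, h⟩) <;> exact h
  have hdisj : Disjoint (B π i) (univ.filter fun j => j < i ∧ π i < π j) := by
    rw [Finset.disjoint_left]
    intro j hj hj'
    exact absurd (((mem_filter.1 hj').2).1.trans ((mem_B).1 hj).1) (lt_irrefl _)
  have := card_filter_apply_lt π (π i)
  rw [hsplit, Finset.card_union_of_disjoint hdisj] at this
  have hx : (π i : ℕ) < n := (π i).isLt
  have hn0 : 0 < n := Fin.pos i
  unfold rr
  omega

lemma codeF_injective : Function.Injective (codeF (n := n)) := by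
  intro π σ h
  have main : ∀ m : ℕ, ∀ i : Fin n, (i : ℕ) = m → π i = σ i := by
    intro m
    induction m using Nat.strong_induction_on with
    | _ m ih =>
      intro i him
      have hear : ∀ j : Fin n, j < i → π j = σ j := by
        intro j hj
        exact ih (j : ℕ) (by rw [← him]; exact Fin.lt_def.1 hj) j rfl
      set A : Finset (Fin n) := (univ.filter fun j => j < i).image π with hA
      have hAσ : A = (univ.filter fun j => j < i).image σ :=
        Finset.image_congr (fun j hj => hear j (mem_filter.1 hj).2)
      -- left-count equals count inside A
      have hL : ∀ (τ : Equiv.Perm (Fin n)), A = (univ.filter fun j => j < i).image τ →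
          (univ.filter fun j => j < i ∧ τ i < τ j).card
            = (A.filter fun u => τ i < u).card := by
        intro τ hAτ
        apply Finset.card_bij (fun j _ => τ j)
        · intro a ha
          simp only [mem_filter, mem_univ, true_and] at ha
          refine mem_filter.2 ⟨?_, ha.2⟩
          rw [hAτ]; exact Finset.mem_image_of_mem τ (by simp [ha.1])
        · intro a _ b _ hab; exact τ.injective hab
        · intro v hv
          have hv1 := (mem_filter.1 hv).1
          rw [hAτ] at hv1
          obtain ⟨j, hj, rfl⟩ := Finset.mem_image.1 hv1
          refine ⟨j, ?_, rfl⟩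
          simp only [mem_filter, mem_univ, true_and]
          exact ⟨(mem_filter.1 hj).2, (mem_filter.1 hv).2⟩
      have hg : (π i : ℕ) + (A.filter fun u => π i < u).card
          = (σ i : ℕ) + (A.filter fun u => σ i < u).card := by
        have k1 := key π i
        have k2 := key σ i
        rw [hL π hA] at k1
        rw [hL σ hAσ] at k2
        have hrr : rr π i = rr σ i := congrFun h i
        omega
      have hπA : π i ∉ A := by
        intro hmem
        obtain ⟨j, hj, hje⟩ := Finset.mem_image.1 hmem
        have := π.injective hje
        rw [this] at hj
        exact absurd (mem_filter.1 hj).2 (lt_irrefl i)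
      have hσA : σ i ∉ A := by
        rw [hAσ]
        intro hmem
        obtain ⟨j, hj, hje⟩ := Finset.mem_image.1 hmem
        have := σ.injective hje
        rw [this] at hj
        exact absurd (mem_filter.1 hj).2 (lt_irrefl i)
      have mono : ∀ v w : Fin n, v < w → w ∉ A →
          (v : ℕ) + (A.filter fun u => v < u).card
            < (w : ℕ) + (A.filter fun u => w < u).card := by
        intro v w hvw hwA
        have hsub : (A.filter fun u => v < u)
            ⊆ (A.filter fun u => v < u ∧ u < w) ∪ (A.filter fun u => w < u) := by
          intro u hu
          have hu1 := (mem_filter.1 hu).1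
          have hu2 := (mem_filter.1 hu).2
          rcases lt_trichotomy u w with h' | h' | h'
          · exact Finset.mem_union_left _ (mem_filter.2 ⟨hu1, hu2, h'⟩)
          · exact absurd (h' ▸ hu1) hwA
          · exact Finset.mem_union_right _ (mem_filter.2 ⟨hu1, h'⟩)
        have hc1 : (A.filter fun u => v < u ∧ u < w).card ≤ (w : ℕ) - v - 1 := by
          rw [← Fin.card_Ioo (a := v) (b := w)]
          exact Finset.card_le_card (fun u hu => by
            simp only [Finset.mem_Ioo]
            exact (mem_filter.1 hu).2)
        have := (Finset.card_le_card hsub).trans (Finset.card_union_le _ _)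
        have hvwn : (v : ℕ) < (w : ℕ) := Fin.lt_def.1 hvw
        omega
      rcases lt_trichotomy (π i) (σ i) with h' | h' | h'
      · exact absurd hg (Nat.ne_of_lt (mono _ _ h' hσA))
      · exact h'
      · exact absurd hg.symm (Nat.ne_of_lt (mono _ _ h' hπA))
  exact Equiv.ext fun i => main (i : ℕ) i rfl
def p123 (π : Equiv.Perm (Fin n)) (t : Fin n × Fin n × Fin n) : Prop :=
  t.1 < t.2.1 ∧ t.2.1 < t.2.2 ∧ π t.1 < π t.2.1 ∧ π t.2.1 < π t.2.2
def p132 (π : Equiv.Perm (Fin n)) (t : Fin n × Fin n × Fin n) : Prop :=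
  t.1 < t.2.1 ∧ t.2.1 < t.2.2 ∧ π t.1 < π t.2.2 ∧ π t.2.2 < π t.2.1

def Good (π : Equiv.Perm (Fin n)) : Prop :=
  (∃! t : Fin n × Fin n × Fin n, p123 π t) ∧ (∃! t : Fin n × Fin n × Fin n, p132 π t)

def GoodCode (n : ℕ) (c : Fin n → ℕ) : Prop :=
  ∃ a b a1 b1 : Fin n, (a : ℕ) + 2 ≤ (b : ℕ) ∧ (a1 : ℕ) = (a : ℕ) + 1 ∧
    (b1 : ℕ) = (b : ℕ) + 1 ∧ c a = 2 ∧ c b = 2 ∧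
    (∀ i, i ≠ a → i ≠ b → c i ≤ 1) ∧ c a1 + c b1 = 1

lemma card2 {π : Equiv.Perm (Fin n)} {i : Fin n} (h : rr π i = 2) :
    ∃ j k, j < k ∧ B π i = {j, k} := by
  obtain ⟨x, y, hxy, hs⟩ := Finset.card_eq_two.1 h
  rcases lt_or_gt_of_ne hxy with h' | h'
  · exact ⟨x, y, h', hs⟩
  · exact ⟨y, x, h', by rw [hs, Finset.pair_comm]⟩

lemma two_le_rr {π : Equiv.Perm (Fin n)} {i j k : Fin n} (hjk : j ≠ k)
    (hj : j ∈ B π i) (hk : k ∈ B π i) : 2 ≤ rr π i := by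
  have hsub : ({j, k} : Finset (Fin n)) ⊆ B π i :=
    Finset.insert_subset hj (Finset.singleton_subset_iff.2 hk)
  calc 2 = ({j, k} : Finset (Fin n)).card := (Finset.card_pair hjk).symm
    _ ≤ rr π i := Finset.card_le_card hsub

lemma pair_eq {π : Equiv.Perm (Fin n)} {i j k j' k' : Fin n}
    (hB : B π i = {j, k}) (hjk : j < k) (hj' : j' ∈ B π i) (hk' : k' ∈ B π i)
    (h' : j' < k') : j' = j ∧ k' = k := by
  rw [hB] at hj' hk'
  rcases Finset.mem_insert.1 hj' with e1 | e1 <;>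
    rcases Finset.mem_insert.1 hk' with e2 | e2 <;>
    first
      | exact ⟨e1, Finset.mem_singleton.1 e2⟩
      | · exfalso
          try rw [Finset.mem_singleton] at e1
          try rw [Finset.mem_singleton] at e2
          subst e1; subst e2
          first
            | exact lt_irrefl _ h'
            | exact lt_irrefl _ (h'.trans hjk)
            | exact lt_irrefl _ (hjk.trans h')
            | exact lt_asymm h' hjk

lemma O1 {π : Equiv.Perm (Fin n)} {i i1 j k : Fin n} (hi1 : (i1 : ℕ) = (i : ℕ) + 1)
    (hB : B π i = {j, k}) (hjk : j < k) (h1 : rr π i1 ≤ 1) :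
    π j < π k ↔ rr π i1 = 1 := by
  have hjB : j ∈ B π i := by rw [hB]; simp
  have hkB : k ∈ B π i := by rw [hB]; simp
  obtain ⟨hij, hπij⟩ := mem_B.1 hjB
  obtain ⟨hik, hπik⟩ := mem_B.1 hkB
  have hii1 : π i < π i1 := by
    by_contra hcon
    have hne : i1 ≠ i := fun e => by rw [e] at hi1; omega
    have hlt : π i1 < π i :=
      lt_of_le_of_ne (not_lt.1 hcon) (fun e => hne (π.injective e))
    have hmem : B π i ⊆ B π i1 := by
      intro m hm
      obtain ⟨him, hπim⟩ := mem_B.1 hm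
      have hmne : (m : ℕ) ≠ (i1 : ℕ) := fun e =>
        absurd ((Fin.ext e : m = i1) ▸ hπim) (not_lt.2 (le_of_lt hlt))
      refine mem_B.2 ⟨Fin.lt_def.2 ?_, lt_trans hlt hπim⟩
      have := Fin.lt_def.1 him
      omega
    have h2 : 2 ≤ rr π i1 := by
      unfold rr
      rw [← Finset.card_pair (ne_of_lt hjk), ← hB]
      exact Finset.card_le_card hmem
    omega
  have hi1lt : i < i1 := Fin.lt_def.2 (by omega)
  have hi1B : i1 ∈ B π i := mem_B.2 ⟨hi1lt, hii1⟩
  have hji1 : j = i1 := by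
    rw [hB] at hi1B
    rcases Finset.mem_insert.1 hi1B with e | e
    · exact e.symm
    · exfalso
      have ek : (k : ℕ) = (i : ℕ) + 1 := by
        rw [← (Finset.mem_singleton.1 e : i1 = k), hi1]
      have h1' := Fin.lt_def.1 hij
      have h2' := Fin.lt_def.1 hjk
      omega
  subst hji1
  constructor
  · intro hlt
    have hkB1 : k ∈ B π j := mem_B.2 ⟨hjk, hlt⟩
    have : 1 ≤ rr π j := Finset.card_pos.2 ⟨k, hkB1⟩
    omega
  · intro he
    by_contra hnot
    have hkj : π k < π j :=
      lt_of_le_of_ne (not_lt.1 hnot) (fun e => (ne_of_lt hjk).symm (π.injective e))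
    have : B π j = ∅ := by
      rw [Finset.eq_empty_iff_forall_notMem]
      intro m hm
      obtain ⟨h1m, h2m⟩ := mem_B.1 hm
      have hmB : m ∈ B π i := mem_B.2 ⟨hi1lt.trans h1m, hii1.trans h2m⟩
      rw [hB] at hmB
      rcases Finset.mem_insert.1 hmB with e | e
      · exact absurd (e ▸ h1m) (lt_irrefl _)
      · rw [Finset.mem_singleton.1 e] at h2m
        exact absurd (h2m.trans hkj) (lt_irrefl _)
    rw [rr, this] at he
    simp at he

lemma O2 {π : Equiv.Perm (Fin n)} {i i1 : Fin n} (hi1 : (i1 : ℕ) = (i : ℕ) + 1)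
    (h2 : rr π i = 2) (h2' : rr π i1 = 2) : B π i = B π i1 := by
  have hii1 : i < i1 := Fin.lt_def.2 (by omega)
  have hne : i1 ≠ i := fun e => by rw [e] at hi1; omega
  have hlt : π i1 < π i := by
    by_contra hcon
    have hgt : π i < π i1 :=
      lt_of_le_of_ne (not_lt.1 hcon) (fun e => hne (π.injective e.symm))
    have hsub : B π i1 ⊆ (B π i).erase i1 := by
      intro m hm
      obtain ⟨h1m, h2m⟩ := mem_B.1 hm
      exact Finset.mem_erase.2 ⟨ne_of_gt h1m,
        mem_B.2 ⟨hii1.trans h1m, hgt.trans h2m⟩⟩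
    have hi1B : i1 ∈ B π i := mem_B.2 ⟨hii1, hgt⟩
    have hc := Finset.card_le_card hsub
    rw [Finset.card_erase_of_mem hi1B] at hc
    unfold rr at h2 h2'
    omega
  have hsub : B π i ⊆ B π i1 := by
    intro m hm
    obtain ⟨h1m, h2m⟩ := mem_B.1 hm
    have hmne : (m : ℕ) ≠ (i1 : ℕ) := fun e =>
      absurd ((Fin.ext e : m = i1) ▸ h2m) (not_lt.2 (le_of_lt hlt))
    refine mem_B.2 ⟨Fin.lt_def.2 ?_, hlt.trans h2m⟩
    have := Fin.lt_def.1 h1m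
    omega
  exact Finset.eq_of_subset_of_card_le hsub (by unfold rr at h2 h2'; omega)

lemma mem_of_123T {π : Equiv.Perm (Fin n)} {t : Fin n × Fin n × Fin n} (h : p123 π t) :
    t.2.1 ∈ B π t.1 ∧ t.2.2 ∈ B π t.1 := by
  obtain ⟨h1, h2, h3, h4⟩ := h
  exact ⟨mem_B.2 ⟨h1, h3⟩, mem_B.2 ⟨h1.trans h2, h3.trans h4⟩⟩

lemma mem_of_132T {π : Equiv.Perm (Fin n)} {t : Fin n × Fin n × Fin n} (h : p132 π t) :
    t.2.1 ∈ B π t.1 ∧ t.2.2 ∈ B π t.1 := by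
  obtain ⟨h1, h2, h3, h4⟩ := h
  exact ⟨mem_B.2 ⟨h1, h3.trans h4⟩, mem_B.2 ⟨h1.trans h2, h3⟩⟩

lemma unique123 {π : Equiv.Perm (Fin n)} {a b ja ka jb kb : Fin n}
    (hBa : B π a = {ja, ka}) (hjka : ja < ka)
    (hBb : B π b = {jb, kb}) (hjkb : jb < kb) (hne : a ≠ b)
    (hothers : ∀ i, i ≠ a → i ≠ b → rr π i ≤ 1)
    (hasc : π ja < π ka) (hdesc : π kb < π jb) :
    ∃! t : Fin n × Fin n × Fin n, p123 π t := by
  have hjaB : ja ∈ B π a := by rw [hBa]; simp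
  have hkaB : ka ∈ B π a := by rw [hBa]; simp
  refine ⟨(a, ja, ka), ⟨(mem_B.1 hjaB).1, hjka, (mem_B.1 hjaB).2, hasc⟩, ?_⟩
  rintro ⟨i, j, k⟩ ht
  obtain ⟨hjB, hkB⟩ := mem_of_123T ht
  obtain ⟨h1, h2, h3, h4⟩ := ht
  simp only at hjB hkB h1 h2 h3 h4
  have hiab : i = a ∨ i = b := by
    by_contra hcon
    push_neg at hcon
    have := hothers i hcon.1 hcon.2
    have := two_le_rr (ne_of_lt h2) hjB hkB
    omega
  rcases hiab with rfl | rfl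
  · obtain ⟨e1, e2⟩ := pair_eq hBa hjka hjB hkB h2
    rw [e1, e2]
  · obtain ⟨e1, e2⟩ := pair_eq hBb hjkb hjB hkB h2
    rw [e1, e2] at h4
    exact absurd (h4.trans hdesc) (lt_irrefl _)

lemma unique132 {π : Equiv.Perm (Fin n)} {a b ja ka jb kb : Fin n}
    (hBa : B π a = {ja, ka}) (hjka : ja < ka)
    (hBb : B π b = {jb, kb}) (hjkb : jb < kb) (hne : a ≠ b)
    (hothers : ∀ i, i ≠ a → i ≠ b → rr π i ≤ 1)
    (hasc : π ja < π ka) (hdesc : π kb < π jb) :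
    ∃! t : Fin n × Fin n × Fin n, p132 π t := by
  have hjbB : jb ∈ B π b := by rw [hBb]; simp
  have hkbB : kb ∈ B π b := by rw [hBb]; simp
  refine ⟨(b, jb, kb), ⟨(mem_B.1 hjbB).1, hjkb, (mem_B.1 hkbB).2, hdesc⟩, ?_⟩
  rintro ⟨i, j, k⟩ ht
  obtain ⟨hjB, hkB⟩ := mem_of_132T ht
  obtain ⟨h1, h2, h3, h4⟩ := ht
  simp only at hjB hkB h1 h2 h3 h4
  have hiab : i = a ∨ i = b := by
    by_contra hcon
    push_neg at hcon
    have := hothers i hcon.1 hcon.2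
    have := two_le_rr (ne_of_lt h2) hjB hkB
    omega
  rcases hiab with rfl | rfl
  · obtain ⟨e1, e2⟩ := pair_eq hBa hjka hjB hkB h2
    rw [e1, e2] at h4
    exact absurd (h4.trans hasc) (lt_irrefl _)
  · obtain ⟨e1, e2⟩ := pair_eq hBb hjkb hjB hkB h2
    rw [e1, e2]


lemma mem_of_123 {π : Equiv.Perm (Fin n)} {i j k : Fin n} (h : p123 π (i, j, k)) :
    j ∈ B π i ∧ k ∈ B π i := by
  obtain ⟨h1, h2, h3, h4⟩ := h
  exact ⟨mem_B.2 ⟨h1, h3⟩, mem_B.2 ⟨h1.trans h2, h3.trans h4⟩⟩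
lemma mem_of_132 {π : Equiv.Perm (Fin n)} {i j k : Fin n} (h : p132 π (i, j, k)) :
    j ∈ B π i ∧ k ∈ B π i := by
  obtain ⟨h1, h2, h3, h4⟩ := h
  exact ⟨mem_B.2 ⟨h1, h3.trans h4⟩, mem_B.2 ⟨h1.trans h2, h3⟩⟩

lemma goodcode_to_good {π : Equiv.Perm (Fin n)} (h : GoodCode n (codeF π)) : Good π := by
  obtain ⟨a, b, a1, b1, hab, ha1, hb1, hca, hcb, hothers, hsum⟩ := h
  have hca' : rr π a = 2 := hca
  have hcb' : rr π b = 2 := hcb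
  have hothers' : ∀ i, i ≠ a → i ≠ b → rr π i ≤ 1 := hothers
  obtain ⟨ja, ka, hjka, hBa⟩ := card2 hca'
  obtain ⟨jb, kb, hjkb, hBb⟩ := card2 hcb'
  have hane : a ≠ b := fun e => by rw [e] at hab; omega
  have hra1 : rr π a1 ≤ 1 :=
    hothers' a1 (fun e => by rw [e] at ha1; omega) (fun e => by rw [e] at ha1; omega)
  have hrb1 : rr π b1 ≤ 1 :=
    hothers' b1 (fun e => by rw [e] at hb1; omega) (fun e => by rw [e] at hb1; omega)
  have hOa := O1 ha1 hBa hjka hra1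
  have hOb := O1 hb1 hBb hjkb hrb1
  have hsum' : rr π a1 + rr π b1 = 1 := hsum
  have hcases : (rr π a1 = 1 ∧ rr π b1 = 0) ∨ (rr π a1 = 0 ∧ rr π b1 = 1) := by omega
  rcases hcases with ⟨e1, e2⟩ | ⟨e1, e2⟩
  · have hasc : π ja < π ka := hOa.2 e1
    have hdesc : π kb < π jb := by
      have hne' : π jb ≠ π kb := fun e => (ne_of_lt hjkb) (π.injective e)
      have hnl : ¬ π jb < π kb := fun hh => by rw [hOb.1 hh] at e2; omega
      exact lt_of_le_of_ne (not_lt.1 hnl) (Ne.symm hne')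
    exact ⟨unique123 hBa hjka hBb hjkb hane hothers' hasc hdesc,
           unique132 hBa hjka hBb hjkb hane hothers' hasc hdesc⟩
  · have hasc : π jb < π kb := hOb.2 e2
    have hdesc : π ka < π ja := by
      have hne' : π ja ≠ π ka := fun e => (ne_of_lt hjka) (π.injective e)
      have hnl : ¬ π ja < π ka := fun hh => by rw [hOa.1 hh] at e1; omega
      exact lt_of_le_of_ne (not_lt.1 hnl) (Ne.symm hne')
    exact ⟨unique123 hBb hjkb hBa hjka hane.symm (fun i h1 h2 => hothers' i h2 h1) hasc hdesc,
           unique132 hBb hjkb hBa hjka hane.symm (fun i h1 h2 => hothers' i h2 h1) hasc hdesc⟩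

lemma rr_le_two {π : Equiv.Perm (Fin n)} (hg : Good π) (i : Fin n) : rr π i ≤ 2 := by
  by_contra hcon
  push_neg at hcon
  have hcard : 2 < (B π i).card := hcon
  have hne : (B π i).Nonempty := Finset.card_pos.1 (by omega)
  set s := B π i with hs
  have hxz : s.min' hne < s.max' hne := Finset.min'_lt_max'_of_card s (by omega)
  set x := s.min' hne
  set z := s.max' hne
  have hmm : ((s.erase x).erase z).Nonempty := by
    apply Finset.card_pos.1
    have h2z : z ∈ s.erase x := Finset.mem_erase.2 ⟨ne_of_gt hxz, Finset.max'_mem s hne⟩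
    rw [Finset.card_erase_of_mem h2z, Finset.card_erase_of_mem (Finset.min'_mem s hne)]
    omega
  obtain ⟨y, hy⟩ := hmm
  have hyz : y ≠ z := (Finset.mem_erase.1 hy).1
  have hys : y ∈ s := Finset.mem_of_mem_erase (Finset.mem_of_mem_erase hy)
  have hyx : y ≠ x := (Finset.mem_erase.1 (Finset.mem_of_mem_erase hy)).1
  have hxy : x < y := lt_of_le_of_ne (Finset.min'_le s y hys) (Ne.symm hyx)
  have hyz' : y < z := lt_of_le_of_ne (Finset.le_max' s y hys) hyz
  have tri : ∀ u v : Fin n, u ∈ s → v ∈ s → u < v →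
      p123 π (i, u, v) ∨ p132 π (i, u, v) := by
    intro u v hu hv huv
    obtain ⟨h1u, h2u⟩ := mem_B.1 (hs ▸ hu)
    obtain ⟨h1v, h2v⟩ := mem_B.1 (hs ▸ hv)
    have hπne : π u ≠ π v := fun e => (ne_of_lt huv) (π.injective e)
    rcases lt_or_gt_of_ne hπne with h' | h'
    · exact Or.inl ⟨h1u, huv, h2u, h'⟩
    · exact Or.inr ⟨h1u, huv, h2v, h'⟩
  have no2 : ∀ {p : Fin n × Fin n × Fin n → Prop}, (∃! t, p t) →
      ∀ {s t : Fin n × Fin n × Fin n}, p s → p t → s = t := by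
    rintro p ⟨u, _, hu⟩ s t hs' ht'
    rw [hu s hs', hu t ht']
  obtain ⟨hu1, hu2⟩ := hg
  have d1 : ((i, x, y) : Fin n × Fin n × Fin n) ≠ (i, x, z) := by
    intro e; exact hyz (congrArg (fun t => t.2.2) e)
  have d2 : ((i, x, y) : Fin n × Fin n × Fin n) ≠ (i, y, z) := by
    intro e; exact hyx (congrArg (fun t => t.2.1) e).symm
  have d3 : ((i, x, z) : Fin n × Fin n × Fin n) ≠ (i, y, z) := by
    intro e; exact hyx (congrArg (fun t => t.2.1) e).symm
  rcases tri x y (Finset.min'_mem s hne) hys hxy with q1 | q1 <;>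
    rcases tri x z (Finset.min'_mem s hne) (Finset.max'_mem s hne) hxz with q2 | q2 <;>
      rcases tri y z hys (Finset.max'_mem s hne) hyz' with q3 | q3 <;>
        first
          | exact d1 (no2 hu1 q1 q2)
          | exact d1 (no2 hu2 q1 q2)
          | exact d2 (no2 hu1 q1 q3)
          | exact d2 (no2 hu2 q1 q3)
          | exact d3 (no2 hu1 q2 q3)
          | exact d3 (no2 hu2 q2 q3)

lemma orient1 {π : Equiv.Perm (Fin n)} {i i1 j k : Fin n} (hri : rr π i = 2)
    (hi1 : (i1 : ℕ) = (i : ℕ) + 1) (hle : rr π i1 ≤ 1)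
    (hjB : j ∈ B π i) (hkB : k ∈ B π i) (hjk : j < k) (hasc : π j < π k) :
    rr π i1 = 1 := by
  obtain ⟨j', k', hjk', hB⟩ := card2 hri
  obtain ⟨e1, e2⟩ := pair_eq hB hjk' hjB hkB hjk
  rw [e1, e2] at hasc
  exact (O1 hi1 hB hjk' hle).1 hasc

lemma orient0 {π : Equiv.Perm (Fin n)} {i i1 j k : Fin n} (hri : rr π i = 2)
    (hi1 : (i1 : ℕ) = (i : ℕ) + 1) (hle : rr π i1 ≤ 1)
    (hjB : j ∈ B π i) (hkB : k ∈ B π i) (hjk : j < k) (hdesc : π k < π j) :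
    rr π i1 = 0 := by
  obtain ⟨j', k', hjk', hB⟩ := card2 hri
  obtain ⟨e1, e2⟩ := pair_eq hB hjk' hjB hkB hjk
  rw [e1, e2] at hdesc
  have : ¬ π j' < π k' := fun hh => absurd (hh.trans hdesc) (lt_irrefl _)
  have h1 : rr π i1 ≠ 1 := fun e => this ((O1 hi1 hB hjk' hle).2 e)
  omega

lemma nonadj {π : Equiv.Perm (Fin n)} {i i' j k j' k' : Fin n}
    (hri : rr π i = 2) (hri' : rr π i' = 2) (he : (i' : ℕ) = (i : ℕ) + 1)
    (hjB : j ∈ B π i) (hkB : k ∈ B π i) (hjk : j < k) (hasc : π j < π k)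
    (hjB' : j' ∈ B π i') (hkB' : k' ∈ B π i') (hjk' : j' < k') (hdesc : π k' < π j') :
    False := by
  have hBB := O2 he hri hri'
  obtain ⟨u, v, huv, hB⟩ := card2 hri
  obtain ⟨e1, e2⟩ := pair_eq hB huv hjB hkB hjk
  have hB' : B π i' = {u, v} := by rw [← hBB]; exact hB
  obtain ⟨e3, e4⟩ := pair_eq hB' huv hjB' hkB' hjk'
  rw [e1, e2] at hasc
  rw [e3, e4] at hdesc
  exact absurd (hasc.trans hdesc) (lt_irrefl _)

lemma nonadj' {π : Equiv.Perm (Fin n)} {i i' j k j' k' : Fin n}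
    (hri : rr π i = 2) (hri' : rr π i' = 2) (he : (i' : ℕ) = (i : ℕ) + 1)
    (hjB : j ∈ B π i) (hkB : k ∈ B π i) (hjk : j < k) (hdesc : π k < π j)
    (hjB' : j' ∈ B π i') (hkB' : k' ∈ B π i') (hjk' : j' < k') (hasc : π j' < π k') :
    False := by
  have hBB := O2 he hri hri'
  obtain ⟨u, v, huv, hB⟩ := card2 hri
  obtain ⟨e1, e2⟩ := pair_eq hB huv hjB hkB hjk
  have hB' : B π i' = {u, v} := by rw [← hBB]; exact hB
  obtain ⟨e3, e4⟩ := pair_eq hB' huv hjB' hkB' hjk'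
  rw [e1, e2] at hdesc
  rw [e3, e4] at hasc
  exact absurd (hasc.trans hdesc) (lt_irrefl _)

lemma good_to_goodcode {π : Equiv.Perm (Fin n)} (hg : Good π) : GoodCode n (codeF π) := by
  obtain ⟨t1, ht1, hu1⟩ := hg.1
  obtain ⟨t2, ht2, hu2⟩ := hg.2
  obtain ⟨i1, j1, k1⟩ := t1
  obtain ⟨i2, j2, k2⟩ := t2
  obtain ⟨m11, m12⟩ := mem_of_123 ht1
  obtain ⟨m21, m22⟩ := mem_of_132 ht2
  obtain ⟨h11, h12, h13, h14⟩ := ht1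
  obtain ⟨h21, h22, h23, h24⟩ := ht2
  simp only at h11 h12 h13 h14 h21 h22 h23 h24
  have hri1 : rr π i1 = 2 := le_antisymm (rr_le_two hg i1) (two_le_rr (ne_of_lt h12) m11 m12)
  have hri2 : rr π i2 = 2 := le_antisymm (rr_le_two hg i2) (two_le_rr (ne_of_lt h22) m21 m22)
  have hne12 : i1 ≠ i2 := by
    rintro rfl
    obtain ⟨j, k, hjk, hB⟩ := card2 hri1
    obtain ⟨e1, e2⟩ := pair_eq hB hjk m11 m12 h12
    obtain ⟨e3, e4⟩ := pair_eq hB hjk m21 m22 h22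
    rw [e1, e2] at h14
    rw [e3, e4] at h24
    exact absurd (h14.trans h24) (lt_irrefl _)
  have hothers : ∀ i, i ≠ i1 → i ≠ i2 → rr π i ≤ 1 := by
    intro i hn1 hn2
    by_contra hcon
    have h2i : rr π i = 2 := le_antisymm (rr_le_two hg i) (by omega)
    obtain ⟨j, k, hjk, hB⟩ := card2 h2i
    have hjB : j ∈ B π i := by rw [hB]; simp
    have hkB : k ∈ B π i := by rw [hB]; simp
    obtain ⟨hij, hπij⟩ := mem_B.1 hjB
    obtain ⟨hik, hπik⟩ := mem_B.1 hkB
    have hπne : π j ≠ π k := fun e => (ne_of_lt hjk) (π.injective e)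
    rcases lt_or_gt_of_ne hπne with h' | h'
    · exact hn1 (congrArg (fun t => t.1) (hu1 (i, j, k) ⟨hij, hjk, hπij, h'⟩))
    · exact hn2 (congrArg (fun t => t.1) (hu2 (i, j, k) ⟨hij, hjk, hπik, h'⟩))
  have hblt : ∀ i : Fin n, rr π i = 2 → (i : ℕ) + 1 < n := by
    intro i hri
    obtain ⟨j, k, hjk, hB⟩ := card2 hri
    have hjB : j ∈ B π i := by rw [hB]; simp
    have := Fin.lt_def.1 (mem_B.1 hjB).1
    have := j.isLt
    omega
  rcases lt_or_gt_of_ne hne12 with hlt | hlt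
  · -- a = i1 (123, ascending), b = i2 (132, descending)
    have ha1lt : (i1 : ℕ) + 1 < n := hblt i1 hri1
    have hb1lt : (i2 : ℕ) + 1 < n := hblt i2 hri2
    have hnadj : (i1 : ℕ) + 2 ≤ (i2 : ℕ) := by
      by_contra hcon
      have he : (i2 : ℕ) = (i1 : ℕ) + 1 := by
        have := Fin.lt_def.1 hlt; omega
      exact nonadj hri1 hri2 he m11 m12 h12 h14 m21 m22 h22 h24
    refine ⟨i1, i2, ⟨(i1 : ℕ) + 1, ha1lt⟩, ⟨(i2 : ℕ) + 1, hb1lt⟩, hnadj, rfl, rfl,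
      hri1, hri2, hothers, ?_⟩
    have hra1le : rr π ⟨(i1 : ℕ) + 1, ha1lt⟩ ≤ 1 :=
      hothers _ (fun e => by have := congrArg Fin.val e; simp at this)
        (fun e => by have := congrArg Fin.val e; simp at this; omega)
    have hrb1le : rr π ⟨(i2 : ℕ) + 1, hb1lt⟩ ≤ 1 :=
      hothers _ (fun e => by have := congrArg Fin.val e; simp at this; omega)
        (fun e => by have := congrArg Fin.val e; simp at this)
    have e1 : rr π ⟨(i1 : ℕ) + 1, ha1lt⟩ = 1 :=
      orient1 hri1 rfl hra1le m11 m12 h12 h14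
    have e2 : rr π ⟨(i2 : ℕ) + 1, hb1lt⟩ = 0 :=
      orient0 hri2 rfl hrb1le m21 m22 h22 h24
    show rr π _ + rr π _ = 1
    omega
  · -- a = i2 (132, descending), b = i1 (123, ascending)
    have ha1lt : (i2 : ℕ) + 1 < n := hblt i2 hri2
    have hb1lt : (i1 : ℕ) + 1 < n := hblt i1 hri1
    have hnadj : (i2 : ℕ) + 2 ≤ (i1 : ℕ) := by
      by_contra hcon
      have he : (i1 : ℕ) = (i2 : ℕ) + 1 := by
        have := Fin.lt_def.1 hlt; omega
      exact nonadj' hri2 hri1 he m21 m22 h22 h24 m11 m12 h12 h14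
    refine ⟨i2, i1, ⟨(i2 : ℕ) + 1, ha1lt⟩, ⟨(i1 : ℕ) + 1, hb1lt⟩, hnadj, rfl, rfl,
      hri2, hri1, fun i hn2 hn1 => hothers i hn1 hn2, ?_⟩
    have hra1le : rr π ⟨(i2 : ℕ) + 1, ha1lt⟩ ≤ 1 :=
      hothers _ (fun e => by have := congrArg Fin.val e; simp at this; omega)
        (fun e => by have := congrArg Fin.val e; simp at this)
    have hrb1le : rr π ⟨(i1 : ℕ) + 1, hb1lt⟩ ≤ 1 :=
      hothers _ (fun e => by have := congrArg Fin.val e; simp at this)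
        (fun e => by have := congrArg Fin.val e; simp at this; omega)
    have e1 : rr π ⟨(i2 : ℕ) + 1, ha1lt⟩ = 0 :=
      orient0 hri2 rfl hra1le m21 m22 h22 h24
    have e2 : rr π ⟨(i1 : ℕ) + 1, hb1lt⟩ = 1 :=
      orient1 hri1 rfl hrb1le m11 m12 h12 h14
    show rr π _ + rr π _ = 1
    omega
def D0 (n : ℕ) : Finset (Fin n → ℕ) := Fintype.piFinset fun i : Fin n => Finset.range (n - i)

def opts (n : ℕ) (a b : Fin n) (ε : ℕ) (i : Fin n) : Finset ℕ :=
  if i = a then {2} else if i = b then {2}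
  else if (i : ℕ) = (a : ℕ) + 1 then {ε}
  else if (i : ℕ) = (b : ℕ) + 1 then {1 - ε}
  else if (i : ℕ) + 2 ≤ n then {0, 1} else {0}

def E (n : ℕ) (a b : Fin n) (ε : ℕ) : Finset (Fin n → ℕ) :=
  Fintype.piFinset (opts n a b ε)

def P (n : ℕ) : Finset (Fin n × Fin n) :=
  (univ ×ˢ univ).filter fun q => (q.1 : ℕ) + 2 ≤ (q.2 : ℕ) ∧ (q.2 : ℕ) + 3 ≤ n

-- card of D0
lemma card_D0 : (D0 n).card = Nat.factorial n := by
  rw [D0, Fintype.card_piFinset]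
  simp only [Finset.card_range]
  rw [Fin.prod_univ_eq_prod_range (fun i => n - i) n]
  induction n with
  | zero => simp
  | succ m ih =>
      rw [Finset.prod_range_succ' (fun i => m + 1 - i) m]
      simp only [Nat.succ_sub_succ_eq_sub, Nat.sub_zero]
      rw [ih, Nat.factorial_succ, Nat.mul_comm]

-- the free-position predicate
def freeP (n : ℕ) (a b : Fin n) (i : Fin n) : Prop :=
  i ≠ a ∧ i ≠ b ∧ (i : ℕ) ≠ (a : ℕ) + 1 ∧ (i : ℕ) ≠ (b : ℕ) + 1 ∧ (i : ℕ) + 2 ≤ n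

instance : DecidablePred (freeP n a b) := fun i => by unfold freeP; infer_instance

lemma card_opts {a b : Fin n} {ε : ℕ} (i : Fin n) :
    (opts n a b ε i).card = if freeP n a b i then 2 else 1 := by
  unfold opts freeP
  by_cases h1 : i = a
  · rw [if_pos h1]; simp [h1]
  rw [if_neg h1]
  by_cases h2 : i = b
  · rw [if_pos h2]; simp [h1, h2]
  rw [if_neg h2]
  by_cases h3 : (i : ℕ) = (a : ℕ) + 1
  · rw [if_pos h3]; simp [h1, h2, h3]
  rw [if_neg h3]
  by_cases h4 : (i : ℕ) = (b : ℕ) + 1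
  · rw [if_pos h4]; simp [h1, h2, h3, h4]
  rw [if_neg h4]
  by_cases h5 : (i : ℕ) + 2 ≤ n
  · rw [if_pos h5]; simp [h1, h2, h3, h4, h5]
  · rw [if_neg h5]; simp [h1, h2, h3, h4, h5]

lemma card_free {a b : Fin n} (hab : (a : ℕ) + 2 ≤ (b : ℕ)) (hbn : (b : ℕ) + 3 ≤ n) :
    (univ.filter (freeP n a b)).card = n - 5 := by
  have ha1 : (a : ℕ) + 1 < n := by omega
  have hb1 : (b : ℕ) + 1 < n := by omega
  have hn1 : n - 1 < n := by omega
  have hcompl : univ.filter (freeP n a b) =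
      (({a, b, ⟨(a : ℕ) + 1, ha1⟩, ⟨(b : ℕ) + 1, hb1⟩, ⟨n - 1, hn1⟩} : Finset (Fin n))ᶜ) := by
    ext i
    simp only [mem_filter, mem_univ, true_and, Finset.mem_compl, Finset.mem_insert,
      Finset.mem_singleton, freeP]
    constructor
    · rintro ⟨q1, q2, q3, q4, q5⟩
      push_neg
      refine ⟨q1, q2, fun e => q3 (by rw [e]), fun e => q4 (by rw [e]), fun e => ?_⟩
      have : (i : ℕ) = n - 1 := by rw [e]
      omega
    · intro hq
      push_neg at hq
      obtain ⟨q1, q2, q3, q4, q5⟩ := hq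
      have hi := i.isLt
      refine ⟨q1, q2, fun e => q3 (Fin.ext (by simp [e])), fun e => q4 (Fin.ext (by simp [e])), ?_⟩
      have : (i : ℕ) ≠ n - 1 := fun e => q5 (Fin.ext (by simp [e]))
      omega
  rw [hcompl, Finset.card_compl]
  have hcard : ({a, b, ⟨(a : ℕ) + 1, ha1⟩, ⟨(b : ℕ) + 1, hb1⟩, ⟨n - 1, hn1⟩} :
      Finset (Fin n)).card = 5 := by
    rw [Finset.card_insert_of_notMem, Finset.card_insert_of_notMem,
      Finset.card_insert_of_notMem, Finset.card_insert_of_notMem, Finset.card_singleton]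
    all_goals simp [Fin.ext_iff]
    all_goals omega
  rw [hcard]
  simp [Fintype.card_fin]

lemma card_E {a b : Fin n} {ε : ℕ} (hab : (a : ℕ) + 2 ≤ (b : ℕ)) (hbn : (b : ℕ) + 3 ≤ n) :
    (E n a b ε).card = 2 ^ (n - 5) := by
  rw [E, Fintype.card_piFinset]
  calc (∏ i : Fin n, (opts n a b ε i).card)
      = ∏ i : Fin n, (if freeP n a b i then 2 else 1) := by
        exact Finset.prod_congr rfl fun i _ => card_opts i
    _ = (∏ i ∈ univ.filter (freeP n a b), (if freeP n a b i then 2 else 1)) *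
        (∏ i ∈ univ.filter (fun i => ¬ freeP n a b i), (if freeP n a b i then 2 else 1)) :=
        (Finset.prod_filter_mul_prod_filter_not univ _ _).symm
    _ = 2 ^ (n - 5) := by
        have e1 : (∏ i ∈ univ.filter (freeP n a b), (if freeP n a b i then 2 else 1))
            = 2 ^ (n - 5) := by
          rw [Finset.prod_congr rfl (fun i hi => if_pos (mem_filter.1 hi).2),
            Finset.prod_const, card_free hab hbn]
        have e2 : (∏ i ∈ univ.filter (fun i => ¬ freeP n a b i),
            (if freeP n a b i then 2 else 1)) = 1 := by
          rw [Finset.prod_congr rfl (fun i hi => if_neg (mem_filter.1 hi).2)]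
          simp
        rw [e1, e2, mul_one]



lemma E_spec {a b : Fin n} {ε : ℕ} {c : Fin n → ℕ} (hc : c ∈ E n a b ε) :
    c a = 2 ∧ c b = 2 ∧
    (∀ i : Fin n, i ≠ a → i ≠ b → c i ≤ 1 + ε ∧ ((i : ℕ) = (a : ℕ) + 1 → c i = ε) ∧
      ((i : ℕ) ≠ (a : ℕ) + 1 → (i : ℕ) = (b : ℕ) + 1 → c i = 1 - ε) ∧
      ((i : ℕ) ≠ (a : ℕ) + 1 → (i : ℕ) ≠ (b : ℕ) + 1 → c i ≤ 1) ∧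
      ((i : ℕ) ≠ (a : ℕ) + 1 → (i : ℕ) ≠ (b : ℕ) + 1 → ¬ ((i : ℕ) + 2 ≤ n) → c i = 0)) := by
  have hmem : ∀ i, c i ∈ opts n a b ε i := Fintype.mem_piFinset.1 hc
  have hb' : b ≠ a ∨ b = a := by tauto
  refine ⟨?_, ?_, ?_⟩
  · have := hmem a
    unfold opts at this
    rw [if_pos rfl] at this
    simpa using this
  · have := hmem b
    unfold opts at this
    by_cases e : b = a
    · rw [if_pos e] at this; simpa using this
    · rw [if_neg e, if_pos rfl] at this; simpa using this
  · intro i e1 e2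
    have := hmem i
    unfold opts at this
    rw [if_neg e1, if_neg e2] at this
    by_cases e3 : (i : ℕ) = (a : ℕ) + 1
    · rw [if_pos e3] at this
      simp only [Finset.mem_singleton] at this
      exact ⟨by omega, fun _ => this, fun h => absurd e3 h, fun h => absurd e3 h,
        fun h => absurd e3 h⟩
    · rw [if_neg e3] at this
      by_cases e4 : (i : ℕ) = (b : ℕ) + 1
      · rw [if_pos e4] at this
        simp only [Finset.mem_singleton] at this
        exact ⟨by omega, fun h => absurd h e3, fun _ _ => this,
          fun _ h => absurd e4 h, fun _ h => absurd e4 h⟩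
      · rw [if_neg e4] at this
        by_cases e5 : (i : ℕ) + 2 ≤ n
        · rw [if_pos e5] at this
          simp only [Finset.mem_insert, Finset.mem_singleton] at this
          exact ⟨by omega, fun h => absurd h e3, fun _ h => absurd h e4,
            fun _ _ => by omega, fun _ _ h => absurd e5 h⟩
        · rw [if_neg e5] at this
          simp only [Finset.mem_singleton] at this
          exact ⟨by omega, fun h => absurd h e3, fun _ h => absurd h e4,
            fun _ _ => by omega, fun _ _ _ => this⟩

instance instDecGoodCode : DecidablePred (GoodCode n) := fun c => by
  unfold GoodCode; infer_instance

lemma G_eq :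
    (D0 n).filter (GoodCode n) =
      ((P n) ×ˢ ({0, 1} : Finset ℕ)).biUnion (fun q => E n q.1.1 q.1.2 q.2) := by
  ext c
  simp only [mem_filter, mem_biUnion, Finset.mem_product, P, mem_filter, mem_univ, true_and,
    Finset.mem_insert, Finset.mem_singleton]
  constructor
  · rintro ⟨hD, a, b, a1, b1, hab, ha1, hb1, hca, hcb, hothers, hsum⟩
    have hD' : ∀ i : Fin n, c i < n - (i : ℕ) :=
      fun i => Finset.mem_range.1 (Fintype.mem_piFinset.1 hD i)
    have hbn : (b : ℕ) + 3 ≤ n := by have := hD' b; omega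
    have ha1a : a1 ≠ a := fun e => by rw [e] at ha1; omega
    have ha1b : a1 ≠ b := fun e => by rw [e] at ha1; omega
    have hb1a : b1 ≠ a := fun e => by rw [e] at hb1; omega
    have hb1b : b1 ≠ b := fun e => by rw [e] at hb1; omega
    have hca1 : c a1 ≤ 1 := hothers a1 ha1a ha1b
    have hcb1 : c b1 ≤ 1 := hothers b1 hb1a hb1b
    refine ⟨((a, b), c a1), ⟨⟨hab, hbn⟩, by omega⟩, ?_⟩
    refine Fintype.mem_piFinset.2 fun i => ?_
    unfold opts
    by_cases e1 : i = a
    · rw [if_pos e1]; simp only [Finset.mem_singleton]; rw [e1]; exact hca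
    rw [if_neg e1]
    by_cases e2 : i = b
    · rw [if_pos e2]; simp only [Finset.mem_singleton]; rw [e2]; exact hcb
    rw [if_neg e2]
    by_cases e3 : (i : ℕ) = (a : ℕ) + 1
    · rw [if_pos e3]
      have : i = a1 := Fin.ext (by omega)
      simp only [Finset.mem_singleton]; rw [this]
    rw [if_neg e3]
    by_cases e4 : (i : ℕ) = (b : ℕ) + 1
    · rw [if_pos e4]
      have hib : i = b1 := Fin.ext (by omega)
      simp only [Finset.mem_singleton]; rw [hib]; omega
    rw [if_neg e4]
    have hle : c i ≤ 1 := hothers i e1 e2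
    by_cases e5 : (i : ℕ) + 2 ≤ n
    · rw [if_pos e5]; simp only [Finset.mem_insert, Finset.mem_singleton]; omega
    · rw [if_neg e5]
      have := hD' i
      have hi := i.isLt
      simp only [Finset.mem_singleton]
      omega
  · rintro ⟨⟨⟨a, b⟩, ε⟩, hq, hcE⟩
    simp only [Finset.mem_product, mem_univ, true_and] at hq
    obtain ⟨⟨hab, hbn⟩, hε⟩ := hq
    have hεle : ε ≤ 1 := by rcases hε with e | e <;> omega
    obtain ⟨hva, hvb, hrest⟩ := E_spec hcE
    have ha1lt : (a : ℕ) + 1 < n := by omega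
    have hb1lt : (b : ℕ) + 1 < n := by omega
    have hvals : ∀ i : Fin n, i ≠ a → i ≠ b → c i ≤ 1 := by
      intro i e1 e2
      obtain ⟨_, q1, q2, q3, _⟩ := hrest i e1 e2
      by_cases e3 : (i : ℕ) = (a : ℕ) + 1
      · rw [q1 e3]; omega
      by_cases e4 : (i : ℕ) = (b : ℕ) + 1
      · rw [q2 e3 e4]; omega
      · exact q3 e3 e4
    constructor
    · refine Fintype.mem_piFinset.2 fun i => Finset.mem_range.2 ?_
      by_cases e1 : i = a
      · rw [e1, hva]; omega
      by_cases e2 : i = b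
      · rw [e2, hvb]; omega
      have hle := hvals i e1 e2
      have hi := i.isLt
      by_cases e5 : (i : ℕ) + 2 ≤ n
      · omega
      · have e3 : (i : ℕ) ≠ (a : ℕ) + 1 := by omega
        have e4 : (i : ℕ) ≠ (b : ℕ) + 1 := by omega
        have := (hrest i e1 e2).2.2.2.2 e3 e4 e5
        omega
    · refine ⟨a, b, ⟨(a : ℕ) + 1, ha1lt⟩, ⟨(b : ℕ) + 1, hb1lt⟩, hab, rfl, rfl, hva, hvb, hvals, ?_⟩
      have ea : c ⟨(a : ℕ) + 1, ha1lt⟩ = ε := by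
        refine ((hrest _ (fun e => ?_) (fun e => ?_)).2.1 rfl)
        · have := congrArg Fin.val e; simp at this
        · have := congrArg Fin.val e; simp at this; omega
      have eb : c ⟨(b : ℕ) + 1, hb1lt⟩ = 1 - ε := by
        refine ((hrest _ (fun e => ?_) (fun e => ?_)).2.2.1 (by simp; omega) rfl)
        · have := congrArg Fin.val e; simp at this; omega
        · have := congrArg Fin.val e; simp at this
      rw [ea, eb]
      omega

lemma E_disj : ∀ q ∈ (P n) ×ˢ ({0, 1} : Finset ℕ), ∀ q' ∈ (P n) ×ˢ ({0, 1} : Finset ℕ),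
    q ≠ q' → Disjoint (E n q.1.1 q.1.2 q.2) (E n q'.1.1 q'.1.2 q'.2) := by
  rintro ⟨⟨a, b⟩, ε⟩ hq ⟨⟨a', b'⟩, ε'⟩ hq' hne
  simp only [Finset.mem_product, P, mem_filter, mem_univ, true_and,
    Finset.mem_insert, Finset.mem_singleton] at hq hq'
  obtain ⟨⟨hab, hbn⟩, hε⟩ := hq
  obtain ⟨⟨hab', hbn'⟩, hε'⟩ := hq'
  rw [Finset.disjoint_left]
  intro c hc hc'
  obtain ⟨hva, hvb, hrest⟩ := E_spec hc
  obtain ⟨hva', hvb', hrest'⟩ := E_spec hc'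
  have hle : ∀ i : Fin n, i ≠ a' → i ≠ b' → c i ≤ 1 := by
    intro i e1 e2
    obtain ⟨_, q1, q2, q3, _⟩ := hrest' i e1 e2
    by_cases e3 : (i : ℕ) = (a' : ℕ) + 1
    · rw [q1 e3]; omega
    by_cases e4 : (i : ℕ) = (b' : ℕ) + 1
    · rw [q2 e3 e4]; omega
    · exact q3 e3 e4
  have haa : a = a' ∨ a = b' := by
    by_contra hcon
    push_neg at hcon
    have h9 := hle a hcon.1 hcon.2
    rw [hva] at h9
    omega
  have hbb : b = a' ∨ b = b' := by
    by_contra hcon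
    push_neg at hcon
    have h9 := hle b hcon.1 hcon.2
    rw [hvb] at h9
    omega
  have hlt : (a : ℕ) < (b : ℕ) := by omega
  have hlt' : (a' : ℕ) < (b' : ℕ) := by omega
  have hA : a = a' ∧ b = b' := by
    rcases haa with e | e <;> rcases hbb with e' | e'
    · exact ⟨e, by
        exfalso
        have := congrArg Fin.val e
        have := congrArg Fin.val e'
        omega⟩
    · exact ⟨e, e'⟩
    · exfalso
      have := congrArg Fin.val e
      have := congrArg Fin.val e'
      omega
    · exfalso
      have := congrArg Fin.val e
      have := congrArg Fin.val e'
      omega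
  obtain ⟨rfl, rfl⟩ := hA
  -- now ε = ε'
  have ha1lt : (a : ℕ) + 1 < n := by omega
  have hane : (⟨(a : ℕ) + 1, ha1lt⟩ : Fin n) ≠ a := by
    intro e; have := congrArg Fin.val e; simp at this
  have hbne : (⟨(a : ℕ) + 1, ha1lt⟩ : Fin n) ≠ b := by
    intro e; have := congrArg Fin.val e; simp at this; omega
  have e1 : c ⟨(a : ℕ) + 1, ha1lt⟩ = ε := (hrest _ hane hbne).2.1 rfl
  have e2 : c ⟨(a : ℕ) + 1, ha1lt⟩ = ε' := (hrest' _ hane hbne).2.1 rfl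
  exact hne (by rw [Prod.ext_iff, Prod.ext_iff]; exact ⟨⟨rfl, rfl⟩, by omega⟩)

lemma card_P_mul_two (hn : 5 ≤ n) : 2 * (P n).card = (n - 3) * (n - 4) := by
  have h1 : P n = univ.biUnion (fun a : Fin n =>
      ({a} : Finset (Fin n)) ×ˢ (univ.filter fun b : Fin n =>
        (a : ℕ) + 2 ≤ (b : ℕ) ∧ (b : ℕ) + 3 ≤ n)) := by
    ext ⟨a, b⟩
    simp only [P, mem_filter, Finset.mem_product, mem_univ, true_and, mem_biUnion,
      Finset.mem_singleton]
    constructor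
    · intro h; exact ⟨a, rfl, h⟩
    · rintro ⟨a', rfl, h⟩; exact h
  have hdisj : ∀ a ∈ (univ : Finset (Fin n)), ∀ a' ∈ (univ : Finset (Fin n)), a ≠ a' →
      Disjoint (({a} : Finset (Fin n)) ×ˢ (univ.filter fun b : Fin n =>
        (a : ℕ) + 2 ≤ (b : ℕ) ∧ (b : ℕ) + 3 ≤ n))
        (({a'} : Finset (Fin n)) ×ˢ (univ.filter fun b : Fin n =>
        (a' : ℕ) + 2 ≤ (b : ℕ) ∧ (b : ℕ) + 3 ≤ n)) := by
    intro a _ a' _ hne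
    rw [Finset.disjoint_left]
    rintro ⟨x, y⟩ h h'
    simp only [Finset.mem_product, Finset.mem_singleton] at h h'
    exact hne (h.1.symm.trans h'.1)
  have h2 : ∀ a : Fin n, (({a} : Finset (Fin n)) ×ˢ (univ.filter fun b : Fin n =>
      (a : ℕ) + 2 ≤ (b : ℕ) ∧ (b : ℕ) + 3 ≤ n)).card = n - 4 - (a : ℕ) := by
    intro a
    rw [Finset.card_product, Finset.card_singleton, one_mul]
    have : (univ.filter fun b : Fin n => (a : ℕ) + 2 ≤ (b : ℕ) ∧ (b : ℕ) + 3 ≤ n).card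
        = (Finset.Ico ((a : ℕ) + 2) (n - 2)).card := by
      refine Finset.card_bij (fun (b : Fin n) _ => (b : ℕ)) ?_ ?_ ?_
      · intro x hx
        simp only [mem_filter, mem_univ, true_and] at hx
        simp only [Finset.mem_Ico]
        omega
      · intro x _ y _ h; exact Fin.ext h
      · intro v hv
        rw [Finset.mem_Ico] at hv
        have hvn : v < n := by omega
        refine ⟨⟨v, hvn⟩, ?_, rfl⟩
        simp only [mem_filter, mem_univ, true_and]
        exact ⟨hv.1, show v + 3 ≤ n by omega⟩
    rw [this, Nat.card_Ico]
    omega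
  have h3 : (P n).card = ∑ a : Fin n, (n - 4 - (a : ℕ)) := by
    rw [h1, Finset.card_biUnion hdisj]
    exact Finset.sum_congr rfl fun a _ => h2 a
  have h4 : ∑ i ∈ Finset.range n, (n - 4 - i) = ∑ i ∈ Finset.range (n - 4), (n - 4 - i) := by
    refine (Finset.sum_subset (Finset.range_subset_range.2 (by omega)) ?_).symm
    intro x _ hx
    rw [Finset.mem_range] at hx
    omega
  have h5 : ∑ i ∈ Finset.range (n - 4), (n - 4 - i)
      = ∑ i ∈ Finset.range (n - 4), (i + 1) := by
    rw [← Finset.sum_range_reflect (fun i => i + 1) (n - 4)]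
    refine Finset.sum_congr rfl fun j hj => ?_
    rw [Finset.mem_range] at hj
    omega
  have h6 : ∑ i ∈ Finset.range (n - 4), (i + 1) = ∑ i ∈ Finset.range (n - 4 + 1), i := by
    rw [Finset.sum_range_succ' (fun i => i) (n - 4)]
    simp
  have h7 := Finset.sum_range_id_mul_two (n - 4 + 1)
  have h8 : (P n).card = ∑ i ∈ Finset.range (n - 4 + 1), i := by
    rw [h3, Fin.sum_univ_eq_sum_range (fun i => n - 4 - i) n, h4, h5, h6]
  have e3 : (n - 3) * (n - 4) = (n - 4 + 1) * (n - 4 + 1 - 1) := by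
    have a1 : n - 3 = n - 4 + 1 := by omega
    have a2 : n - 4 = n - 4 + 1 - 1 := by omega
    rw [a1, ← a2]
  rw [h8, e3, ← h7]
  ring

lemma count_G (hn : 5 ≤ n) :
    ((D0 n).filter (GoodCode n)).card = (n - 3) * (n - 4) * 2 ^ (n - 5) := by
  rw [G_eq, Finset.card_biUnion E_disj]
  have hterm : ∀ q ∈ (P n) ×ˢ ({0, 1} : Finset ℕ),
      (E n q.1.1 q.1.2 q.2).card = 2 ^ (n - 5) := by
    rintro ⟨⟨a, b⟩, ε⟩ hq
    simp only [Finset.mem_product, P, mem_filter, mem_univ, true_and] at hq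
    exact card_E hq.1.1 hq.1.2
  rw [Finset.sum_congr rfl hterm, Finset.sum_const, Finset.card_product]
  have : ({0, 1} : Finset ℕ).card = 2 := by decide
  rw [this, smul_eq_mul]
  have := card_P_mul_two (n := n) hn
  calc (P n).card * 2 * 2 ^ (n - 5) = 2 * (P n).card * 2 ^ (n - 5) := by ring
    _ = (n - 3) * (n - 4) * 2 ^ (n - 5) := by rw [this]


lemma codeF_mem_D0 (π : Equiv.Perm (Fin n)) : codeF π ∈ D0 n := by
  refine Fintype.mem_piFinset.2 fun i => Finset.mem_range.2 ?_
  have h1 := rr_le π i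
  have h2 := i.isLt
  show rr π i < n - (i : ℕ)
  omega

lemma image_codeF :
    (univ : Finset (Equiv.Perm (Fin n))).image codeF = D0 n := by
  have hsub : (univ : Finset (Equiv.Perm (Fin n))).image codeF ⊆ D0 n := by
    intro c hc
    obtain ⟨π, _, rfl⟩ := Finset.mem_image.1 hc
    exact codeF_mem_D0 π
  have hcard : ((univ : Finset (Equiv.Perm (Fin n))).image codeF).card = (D0 n).card := by
    rw [Finset.card_image_of_injective _ codeF_injective, Finset.card_univ, card_D0]
    rw [Fintype.card_perm, Fintype.card_fin]
  exact Finset.eq_of_subset_of_card_le hsub hcard.ge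

end Stmt10Aux

open Stmt10Aux Finset in
/-- For `n ≥ 5`, the number of permutations of length `n` with exactly one
123-occurrence and exactly one 132-occurrence is `(n-3)(n-4)·2^(n-5)`. -/
theorem stmt10 (n : ℕ) (hn : 5 ≤ n) :
    Nat.card {π : Equiv.Perm (Fin n) //
      (∃! t : Fin n × Fin n × Fin n,
        t.1 < t.2.1 ∧ t.2.1 < t.2.2 ∧ π t.1 < π t.2.1 ∧ π t.2.1 < π t.2.2) ∧
      (∃! t : Fin n × Fin n × Fin n,
        t.1 < t.2.1 ∧ t.2.1 < t.2.2 ∧ π t.1 < π t.2.2 ∧ π t.2.2 < π t.2.1)} =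
    (n - 3) * (n - 4) * 2 ^ (n - 5) := by
  classical
  have hshow : Nat.card {π : Equiv.Perm (Fin n) //
      (∃! t : Fin n × Fin n × Fin n,
        t.1 < t.2.1 ∧ t.2.1 < t.2.2 ∧ π t.1 < π t.2.1 ∧ π t.2.1 < π t.2.2) ∧
      (∃! t : Fin n × Fin n × Fin n,
        t.1 < t.2.1 ∧ t.2.1 < t.2.2 ∧ π t.1 < π t.2.2 ∧ π t.2.2 < π t.2.1)}
      = Nat.card {π : Equiv.Perm (Fin n) // Good π} := rfl
  rw [hshow, Nat.card_eq_fintype_card, Fintype.card_subtype]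
  have h2 : (univ.filter (Good (n := n)))
      = univ.filter (fun π => GoodCode n (codeF π)) :=
    Finset.filter_congr fun π _ => ⟨good_to_goodcode, goodcode_to_good⟩
  rw [h2]
  have h3 := Finset.filter_image (f := codeF (n := n)) (s := univ) (p := GoodCode n)
  rw [image_codeF] at h3
  rw [← Finset.card_image_of_injective
    (univ.filter fun π => GoodCode n (codeF π)) codeF_injective, ← h3]
  exact count_G hn
end

section
/- If a permutation π of {1,...,n} contains exactly one occurrence of 123 and exactly one occurrence of 132, and n occurs at position p with p ≥ 2, then there is no 132-occurrence i < j < k with k < p (i.e., the unique 132-pattern cannot lie entirely before the position of n) — indeed a 132-occurrence entirely among elements preceding n would force at least two 123-occurrences ending at n. -/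
/-- If `π` contains exactly one 123-occurrence and exactly one 132-occurrence,
and the maximum value occurs at position `p` with at least one element before it,
then no 132-occurrence lies entirely before position `p`. -/
theorem stmt13 (n : ℕ) (π : Equiv.Perm (Fin n)) (p : Fin n)
    (hmax : ∀ x : Fin n, π x ≤ π p) (hp : 1 ≤ (p : ℕ))
    (h123 : ∃! t : Fin n × Fin n × Fin n,
      t.1 < t.2.1 ∧ t.2.1 < t.2.2 ∧ π t.1 < π t.2.1 ∧ π t.2.1 < π t.2.2)
    (h132 : ∃! t : Fin n × Fin n × Fin n,
      t.1 < t.2.1 ∧ t.2.1 < t.2.2 ∧ π t.1 < π t.2.2 ∧ π t.2.2 < π t.2.1) :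
    ¬ ∃ i j k : Fin n, i < j ∧ j < k ∧ k < p ∧ π i < π k ∧ π k < π j := by
  rintro ⟨i, j, k, hij, hjk, hkp, hik, hkj⟩
  obtain ⟨t, _, huniq⟩ := h123
  have hjp : j < p := hjk.trans hkp
  have hπj : π j < π p := lt_of_le_of_ne (hmax j) (fun h => absurd (π.injective h) hjp.ne)
  have hπk : π k < π p := lt_of_le_of_ne (hmax k) (fun h => absurd (π.injective h) hkp.ne)
  have h1 := huniq (i, j, p) ⟨hij, hjp, hik.trans hkj, hπj⟩
  have h2 := huniq (i, k, p) ⟨hij.trans hjk, hkp, hik, hπk⟩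
  have : j = k := by
    have := h1.trans h2.symm
    exact (Prod.ext_iff.mp (Prod.ext_iff.mp this).2).1
  exact absurd this hjk.ne
end

section
/- Let π be a permutation of {1,...,n} avoiding both 123 and 132, and let p be the position of the value n. Then the values before position p are exactly n-1, n-2, ..., n-p+1 in decreasing order. -/
/-- If `π` avoids 123 and 132 and the maximum value occurs at position `p`, then
the values before position `p` are exactly `n-1, n-2, …` in decreasing order
(0-indexed: `π a = n - 2 - a` for `a < p`). -/
theorem stmt15 (n : ℕ) (π : Equiv.Perm (Fin n)) (p : Fin n)
    (hmax : ∀ x : Fin n, π x ≤ π p)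
    (havoid123 : ¬ ∃ i j k : Fin n, i < j ∧ j < k ∧ π i < π j ∧ π j < π k)
    (havoid132 : ¬ ∃ i j k : Fin n, i < j ∧ j < k ∧ π i < π k ∧ π k < π j) :
    ∀ a : Fin n, a < p → (π a : ℕ) = n - 2 - (a : ℕ) := by
  -- strictly decreasing before p
  have hdec : ∀ a b : Fin n, a < b → b < p → π b < π a := by
    intro a b hab hbp
    by_contra h
    push_neg at h
    have hne : π a ≠ π b := fun he => absurd (π.injective he) (ne_of_lt hab)
    have h1 : π a < π b := lt_of_le_of_ne h hne
    have h2 : π b < π p :=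
      lt_of_le_of_ne (hmax b) (fun he => absurd (π.injective he) (ne_of_lt hbp))
    exact havoid123 ⟨a, b, p, hab, hbp, h1, h2⟩
  -- everything after p is smaller than everything before p
  have hafter : ∀ a q : Fin n, a < p → p < q → π q < π a := by
    intro a q hap hpq
    by_contra h
    push_neg at h
    have hne : π a ≠ π q := fun he =>
      absurd (π.injective he) (ne_of_lt (lt_trans hap hpq))
    have h1 : π a < π q := lt_of_le_of_ne h hne
    have h2 : π q < π p :=
      lt_of_le_of_ne (hmax q) (fun he => absurd (π.injective he) (ne_of_gt hpq))
    exact havoid132 ⟨a, p, q, hap, hpq, h1, h2⟩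
  intro a hap
  have hset : Finset.univ.filter (fun x => π a ≤ π x) = insert p (Finset.Iic a) := by
    ext x
    simp only [Finset.mem_filter, Finset.mem_univ, true_and, Finset.mem_insert,
      Finset.mem_Iic]
    constructor
    · intro hx
      rcases lt_trichotomy x p with hlt | heq | hgt
      · right
        by_contra hxa
        push_neg at hxa
        exact absurd hx (not_le_of_gt (hdec a x hxa hlt))
      · exact Or.inl heq
      · exact absurd hx (not_le_of_gt (hafter a x hap hgt))
    · rintro (rfl | hxa)
      · exact hmax a
      · rcases eq_or_lt_of_le hxa with rfl | hlt
        · exact le_refl _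
        · exact le_of_lt (hdec x a hlt hap)
  have himg : Finset.image π (Finset.univ.filter (fun x => π a ≤ π x))
      = Finset.Ici (π a) := by
    ext y
    simp only [Finset.mem_image, Finset.mem_filter, Finset.mem_univ, true_and,
      Finset.mem_Ici]
    constructor
    · rintro ⟨x, hx, rfl⟩; exact hx
    · intro hy; exact ⟨π.symm y, by simpa using hy, by simp⟩
  have hcard1 : (Finset.univ.filter (fun x => π a ≤ π x)).card = n - (π a : ℕ) := by
    rw [← Finset.card_image_of_injective _ π.injective, himg, Fin.card_Ici]
  have hcard2 : (Finset.univ.filter (fun x => π a ≤ π x)).card = (a : ℕ) + 2 := by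
    rw [hset, Finset.card_insert_of_notMem (fun hm => absurd (Finset.mem_Iic.mp hm) (not_le_of_gt hap)),
      Fin.card_Iic]
  have hlt : (π a : ℕ) < n := (π a).isLt
  omega
end
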